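/- arXiv:math/0609386 — 14 statements merged into one kernel-verified Lean document; each statement's English description precedes it below -/
import Mathlib

section
/- Let L be a topological group, U a compact open subgroup of L, D a dense subgroup of L, and H a subgroup of L with D ∩ U ⊆ H ⊆ D such that the index [H : D ∩ U] is finite. Then the closure of H in L is a compact open subgroup of L, and the map h·(D ∩ U) ↦ h·U induces a bijection from the left coset space H/(D ∩ U) onto (closure of H)/U; in particular the index of U in the closure of H equals [H : D ∩ U]. -/
/-!
Every `w` in the closure of `H` lies in `h U` for some `h ∈ H`, because `w U` is an open
neighbourhood of `w`; and `U ⊆ closure (D ∩ U) ⊆ closure H` since `U` is open and `D` dense.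
Hence `H → (closure H)/U` is onto, with fibres the cosets of `H ∩ U = D ∩ U`, which gives the
index equality. Then `closure H` is open as it contains `U`, and compact as a finite union of
translates of `U`.
-/

open scoped Pointwise

namespace Subgroup

variable {G : Type*} [Group G]

theorem relIndex_eq_of_forall_exists_inv_mul_mem {U H K : Subgroup G} (hHK : H ≤ K)
    (hcover : ∀ k ∈ K, ∃ h ∈ H, h⁻¹ * k ∈ U) : U.relIndex K = U.relIndex H := by
  refine Nat.card_congr (Equiv.ofBijective (quotientSubgroupOfEmbeddingOfLE U hHK)
    ⟨(quotientSubgroupOfEmbeddingOfLE U hHK).injective, ?_⟩).symm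
  refine QuotientGroup.mk_surjective.forall.2 fun k => ?_
  obtain ⟨h, hH, hU⟩ := hcover k k.2
  exact ⟨QuotientGroup.mk ⟨h, hH⟩, QuotientGroup.eq.2 (mem_subgroupOf.2 hU)⟩

theorem eq_iUnion_smul_quotient_out {U K : Subgroup G} (hUK : U ≤ K) :
    (K : Set G) = ⋃ q : K ⧸ U.subgroupOf K, ((q.out : K) : G) • (U : Set G) := by
  ext k
  simp only [Set.mem_iUnion, Set.mem_smul_set_iff_inv_smul_mem, smul_eq_mul, SetLike.mem_coe]
  constructor
  · intro hk
    obtain ⟨u, hu⟩ := QuotientGroup.mk_out_eq_mul (U.subgroupOf K) ⟨k, hk⟩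
    refine ⟨QuotientGroup.mk ⟨k, hk⟩, ?_⟩
    rw [hu]
    simpa using U.inv_mem (mem_subgroupOf.1 u.2)
  · rintro ⟨q, hq⟩
    simpa using K.mul_mem (q.out : K).2 (hUK hq)

variable [TopologicalSpace G]

theorem isCompact_of_relIndex_ne_zero [ContinuousMul G] {U K : Subgroup G} (hU : IsCompact (U : Set G))
    (hUK : U ≤ K) (hfin : U.relIndex K ≠ 0) : IsCompact (K : Set G) := by
  have : Finite (K ⧸ U.subgroupOf K) := Nat.finite_of_card_ne_zero hfin
  rw [eq_iUnion_smul_quotient_out hUK]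
  exact isCompact_iUnion fun q => hU.smul _

variable [IsTopologicalGroup G]

theorem exists_inv_mul_mem_of_mem_topologicalClosure {U H : Subgroup G}
    (hU : IsOpen (U : Set G)) {w : G} (hw : w ∈ H.topologicalClosure) :
    ∃ h ∈ H, h⁻¹ * w ∈ U := by
  obtain ⟨h, hwh, hH⟩ := mem_closure_iff.1 hw ((w⁻¹ * ·) ⁻¹' (U : Set G))
    (hU.preimage (continuous_const_mul w⁻¹)) (by simp)
  exact ⟨h, hH, by simpa using U.inv_mem hwh⟩

theorem le_topologicalClosure_of_inf_le {U D H : Subgroup G} (hU : IsOpen (U : Set G))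
    (hD : Dense (D : Set G)) (hDUH : D ⊓ U ≤ H) : U ≤ H.topologicalClosure := fun _ hu =>
  _root_.closure_mono (fun _ hx => hDUH ⟨hx.2, hx.1⟩)
    (hD.open_subset_closure_inter hU hu)

end Subgroup

/-- Let `L` be a topological group, `U` a compact open subgroup, `D` a dense
subgroup, and `H` a subgroup with `D ⊓ U ≤ H ≤ D` of finite index `[H : D ⊓ U]`.  Then the
closure of `H` is a compact open subgroup of `L`, the map `h (D ⊓ U) ↦ h U` induces a bijection
`H/(D ⊓ U) ≃ (closure H)/U` (injectivity and surjectivity stated concretely), and in particular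
the index of `U` in the closure of `H` equals `[H : D ⊓ U]`. -/
theorem stmt_0 {L : Type*} [Group L] [TopologicalSpace L] [IsTopologicalGroup L]
    (U D H : Subgroup L)
    (hUc : IsCompact (U : Set L)) (hUo : IsOpen (U : Set L))
    (hD : Dense (D : Set L)) (hDUH : D ⊓ U ≤ H) (hHD : H ≤ D)
    (hfin : ((D ⊓ U).subgroupOf H).index ≠ 0) :
    IsCompact (H.topologicalClosure : Set L) ∧ IsOpen (H.topologicalClosure : Set L) ∧
    (∀ h h' : L, h ∈ H → h' ∈ H → (h⁻¹ * h' ∈ U ↔ h⁻¹ * h' ∈ D ⊓ U)) ∧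
    (∀ w : L, w ∈ H.topologicalClosure → ∃ h ∈ H, h⁻¹ * w ∈ U) ∧
    (U.subgroupOf H.topologicalClosure).index = ((D ⊓ U).subgroupOf H).index := by
  have hUC : U ≤ H.topologicalClosure := Subgroup.le_topologicalClosure_of_inf_le hUo hD hDUH
  have hcover : ∀ w ∈ H.topologicalClosure, ∃ h ∈ H, h⁻¹ * w ∈ U := fun _ hw =>
    Subgroup.exists_inv_mul_mem_of_mem_topologicalClosure hUo hw
  have hDU : (D ⊓ U).subgroupOf H = U.subgroupOf H := by
    ext x
    simp [Subgroup.mem_subgroupOf, hHD x.2]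
  have hindex : U.relIndex H.topologicalClosure = ((D ⊓ U).subgroupOf H).index := by
    rw [hDU]
    exact Subgroup.relIndex_eq_of_forall_exists_inv_mul_mem H.le_topologicalClosure hcover
  refine ⟨Subgroup.isCompact_of_relIndex_ne_zero hUc hUC (hindex ▸ hfin),
    Subgroup.isOpen_mono hUC hUo, fun h h' hh hh' => ⟨fun hu => ?_, And.right⟩, hcover, hindex⟩
  exact ⟨D.mul_mem (D.inv_mem (hHD hh)) (hHD hh'), hu⟩
end

section
/- Let L be a topological group, M a compact open subgroup of L, G a dense subgroup of L, H = G ∩ M, V a finite-dimensional complex inner product space, and σ : M → B(V) a continuous group homomorphism taking values in the unitary operators on V, whose kernel is open in L. Define H_σ(L, M) to be the set of functions f : L → B(V) such that f(mxn) = σ(m) ∘ f(x) ∘ σ(n) for all m, n ∈ M and x ∈ L, and such that the set of double cosets MxM with f(x) ≠ 0 is finite; define H_{σ|H}(G, H) analogously using H and the restriction of σ to H. Then the restriction map f ↦ f|_G is a bijection from H_σ(L, M) onto H_{σ|H}(G, H). Moreover, if L is locally compact Hausdorff and μ is a left Haar measure on L normalized with μ(M) = 1, then for f, g ∈ H_σ(L,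 M) and x ∈ G one has ∫_L f(y) ∘ g(y⁻¹x) dμ(y) = Σ_{r ∈ R} f(r) ∘ g(r⁻¹x) for any set R ⊆ G containing exactly one element of each left coset rH of H in G (only finitely many terms of the sum being nonzero). -/
open MeasureTheory

/-- A function `f : L → B(V)` is a generalised Hecke-algebra element for the subgroup `M`
and the representation `σ : M → B(V)`: it is bi-`(M,σ)`-equivariant and supported on
finitely many double cosets `M x M`. -/
def IsHeckeFun {L : Type*} [Group L] {V : Type*} [NormedAddCommGroup V]
    [InnerProductSpace ℂ V] (M : Subgroup L) (σ : M →* (V →L[ℂ] V))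
    (f : L → (V →L[ℂ] V)) : Prop :=
  (∀ (m n : M) (x : L), f ((m : L) * x * (n : L)) = σ m * f x * σ n) ∧
  ∃ F : Finset L, ∀ y : L, f y ≠ 0 → ∃ x ∈ F, ∃ m n : M, y = (m : L) * x * (n : L)

/-! Let `K ≤ M` be the kernel of `σ`, viewed as a subgroup of `L`; it is open and normalised by
`M`, and every Hecke function is right `K`-invariant. As `G` is dense and `K` is open, every coset
`xK` meets `G`. Hence a Hecke function on `L` is determined by its restriction to `G`, and a Hecke
function `f₀` on `G` extends to `L` by `x ↦ f₀ g` for any `g ∈ xK ∩ G`; equivariance of the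
extension comes from approximating `m ∈ M` by some `a ∈ G ∩ mK`, so that `σ a = σ m`. The same
density argument shows `MxM ∩ G = HxH` for `x ∈ G`, which gives finiteness of the support of a
restriction.

For the convolution, the integrand `y ↦ f y * g (y⁻¹ x)` is constant on left cosets `rM`, each of
Haar measure one, and `R` is also a set of representatives of `L ⧸ M`. Since `M` is compact and
open, a double coset `MxM` is a finite union of left cosets, so only finitely many `r ∈ R` lie in
the support of `f`. -/

section Kernel

variable {L : Type*} [Group L] {A : Type*} [Monoid A] {M : Subgroup L} {σ : M →* A}

theorem coe_map_subtype_ker :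
    (σ.ker.map M.subtype : Set L) = {x : L | ∃ h : x ∈ M, σ ⟨x, h⟩ = 1} := by
  ext x
  constructor
  · rintro ⟨y, hy, rfl⟩
    exact ⟨y.2, hy⟩
  · rintro ⟨h, hx⟩
    exact ⟨⟨x, h⟩, hx, rfl⟩

theorem map_eq_one_of_coe_mem_map_subtype_ker {k : M} (h : (k : L) ∈ σ.ker.map M.subtype) :
    σ k = 1 :=
  (Subgroup.mem_map_iff_mem M.subtype_injective).1 h

theorem map_eq_of_inv_mul_mem_map_subtype_ker {m a : M}
    (h : (m : L)⁻¹ * a ∈ σ.ker.map M.subtype) : σ a = σ m :=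
  σ.eq_iff.2 ((Subgroup.mem_map_iff_mem M.subtype_injective).1 (h : M.subtype (m⁻¹ * a) ∈ _))

theorem mem_of_inv_mul_mem_map_subtype_ker {m a : L} (hm : m ∈ M)
    (h : m⁻¹ * a ∈ σ.ker.map M.subtype) : a ∈ M := by
  simpa using mul_mem hm (Subgroup.map_subtype_le _ h)

theorem mul_mul_inv_mem_map_subtype_ker {m k : L} (hm : m ∈ M) (hk : k ∈ σ.ker.map M.subtype) :
    m * k * m⁻¹ ∈ σ.ker.map M.subtype := by
  obtain ⟨k, hk, rfl⟩ := hk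
  exact ⟨⟨m, hm⟩ * k * ⟨m, hm⟩⁻¹, σ.normal_ker.conj_mem k hk ⟨m, hm⟩, rfl⟩

end Kernel

theorem Dense.exists_mem_inv_mul_mem {L : Type*} [Group L] [TopologicalSpace L]
    [IsTopologicalGroup L] {G : Set L} (hG : Dense G) {U : Set L} (hU : IsOpen U)
    (h1 : (1 : L) ∈ U) (x : L) : ∃ g ∈ G, x⁻¹ * g ∈ U :=
  hG.exists_mem_open (hU.preimage (continuous_const_mul x⁻¹))
    ⟨x, show x⁻¹ * x ∈ U by rwa [inv_mul_cancel]⟩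

namespace IsHeckeFun

variable {L : Type*} [Group L] {V : Type*} [NormedAddCommGroup V] [InnerProductSpace ℂ V]
  {M : Subgroup L} {σ : M →* (V →L[ℂ] V)} {f : L → (V →L[ℂ] V)}

theorem apply_mul (hf : IsHeckeFun M σ f) (x : L) (n : M) : f (x * n) = f x * σ n := by
  simpa using hf.1 1 n x

theorem mul_apply (hf : IsHeckeFun M σ f) (m : M) (x : L) : f (m * x) = σ m * f x := by
  simpa using hf.1 m 1 x

theorem apply_mul_of_mem_map_subtype_ker (hf : IsHeckeFun M σ f) (x : L) {k : L}
    (hk : k ∈ σ.ker.map M.subtype) : f (x * k) = f x := by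
  obtain ⟨k, hk, rfl⟩ := hk
  rw [Subgroup.coe_subtype, hf.apply_mul, MonoidHom.mem_ker.1 hk, mul_one]

theorem conv_integrand_mul_right {g : L → (V →L[ℂ] V)} (hf : IsHeckeFun M σ f)
    (hg : IsHeckeFun M σ g) (x y : L) (m : M) :
    f (y * m) * g ((y * m)⁻¹ * x) = f y * g (y⁻¹ * x) := by
  have hg' : g ((y * m)⁻¹ * x) = σ m⁻¹ * g (y⁻¹ * x) := by
    rw [← hg.mul_apply, mul_inv_rev, mul_assoc, Subgroup.coe_inv]
  rw [hf.apply_mul, hg', mul_assoc, ← mul_assoc (σ m), ← map_mul, mul_inv_cancel, map_one,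
    one_mul]

end IsHeckeFun

section Dense

variable {L : Type*} [Group L] [TopologicalSpace L] [IsTopologicalGroup L] {M G : Subgroup L}

theorem exists_mem_inf_eq_mul_mul (hMo : IsOpen (M : Set L)) (hG : Dense (G : Set L))
    {c y : L} (hc : c ∈ G) (hy : y ∈ G) (m n : M) (h : y = m * c * n) :
    ∃ a ∈ G ⊓ M, ∃ b ∈ G ⊓ M, y = a * c * b := by
  have hU : IsOpen {a : L | a ∈ M ∧ c⁻¹ * a⁻¹ * y ∈ M} :=
    hMo.inter (hMo.preimage (by fun_prop))
  have hm : (m : L) ∈ {a : L | a ∈ M ∧ c⁻¹ * a⁻¹ * y ∈ M} :=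
    ⟨m.2, by simp [h, mul_assoc]⟩
  obtain ⟨a, haG, haM, hb⟩ := hG.exists_mem_open hU ⟨m, hm⟩
  have hbG : c⁻¹ * a⁻¹ * y ∈ G := mul_mem (mul_mem (inv_mem hc) (inv_mem haG)) hy
  exact ⟨a, ⟨haG, haM⟩, c⁻¹ * a⁻¹ * y, ⟨hbG, hb⟩, by group⟩

variable {V : Type*} [NormedAddCommGroup V] [InnerProductSpace ℂ V]
  {σ : M →* (V →L[ℂ] V)} {σ' : ((G ⊓ M).subgroupOf G) →* (V →L[ℂ] V)}

theorem IsHeckeFun.restrict (hMo : IsOpen (M : Set L)) (hG : Dense (G : Set L))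
    (hσ' : ∀ h : (G ⊓ M).subgroupOf G,
      σ' h = σ ⟨((h : G) : L), (Subgroup.mem_inf.mp (Subgroup.mem_subgroupOf.mp h.2)).2⟩)
    {f : L → (V →L[ℂ] V)} (hf : IsHeckeFun M σ f) :
    IsHeckeFun ((G ⊓ M).subgroupOf G) σ' (fun g : G => f g) := by
  refine ⟨fun m n y => ?_, ?_⟩
  · rw [hσ', hσ']
    exact hf.1 ⟨_, _⟩ ⟨_, _⟩ (y : L)
  obtain ⟨F, hF⟩ := hf.2
  choose c hcG hc using fun x => hG.exists_mem_inv_mul_mem hMo M.one_mem x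
  classical
  refine ⟨F.image fun x => (⟨c x, hcG x⟩ : G), fun y hy => ?_⟩
  obtain ⟨x, hxF, m, n, hyx⟩ := hF y hy
  have hn : (c x)⁻¹ * x * n ∈ M := by
    simpa [mul_assoc] using mul_mem (inv_mem (hc x)) n.2
  obtain ⟨a, ha, b, hb, hyab⟩ :=
    exists_mem_inf_eq_mul_mul hMo hG (hcG x) y.2 m ⟨_, hn⟩ (by rw [hyx]; group)
  exact ⟨_, Finset.mem_image_of_mem _ hxF, ⟨⟨a, ha.1⟩, Subgroup.mem_subgroupOf.2 ha⟩,
    ⟨⟨b, hb.1⟩, Subgroup.mem_subgroupOf.2 hb⟩, Subtype.ext (by simpa using hyab)⟩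

theorem IsHeckeFun.eq_of_restrict_eq (hG : Dense (G : Set L))
    (hker : IsOpen (σ.ker.map M.subtype : Set L)) {f f' : L → (V →L[ℂ] V)}
    (hf : IsHeckeFun M σ f) (hf' : IsHeckeFun M σ f') (h : ∀ g : G, f g = f' g) : f = f' := by
  funext x
  obtain ⟨g, hgG, hxg⟩ := hG.exists_mem_inv_mul_mem hker (one_mem _) x
  have hgx : g = x * (x⁻¹ * g) := by group
  rw [← hf.apply_mul_of_mem_map_subtype_ker x hxg, ← hf'.apply_mul_of_mem_map_subtype_ker x hxg,
    ← hgx, h ⟨g, hgG⟩]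

end Dense

section Extension

variable {L : Type*} [Group L] {M G : Subgroup L}
  {V : Type*} [NormedAddCommGroup V] [InnerProductSpace ℂ V]
  {σ : M →* (V →L[ℂ] V)} {σ' : ((G ⊓ M).subgroupOf G) →* (V →L[ℂ] V)}
  {f₀ : G → (V →L[ℂ] V)} {r : L → G}

theorem IsHeckeFun.apply_eq_of_inv_mul_mem_map_subtype_ker
    (hσ' : ∀ h : (G ⊓ M).subgroupOf G,
      σ' h = σ ⟨((h : G) : L), (Subgroup.mem_inf.mp (Subgroup.mem_subgroupOf.mp h.2)).2⟩)
    (hf₀ : IsHeckeFun ((G ⊓ M).subgroupOf G) σ' f₀) {g g' : G}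
    (h : (g : L)⁻¹ * g' ∈ σ.ker.map M.subtype) : f₀ g' = f₀ g := by
  have hH : g⁻¹ * g' ∈ (G ⊓ M).subgroupOf G :=
    Subgroup.mem_subgroupOf.2 ⟨(g⁻¹ * g').2, Subgroup.map_subtype_le _ h⟩
  have hg' : g' = g * (⟨g⁻¹ * g', hH⟩ : (G ⊓ M).subgroupOf G) := by simp
  rw [hg', hf₀.apply_mul, hσ', map_eq_one_of_coe_mem_map_subtype_ker h, mul_one]

theorem IsHeckeFun.comp_eq_of_inv_mul_mem_map_subtype_ker
    (hσ' : ∀ h : (G ⊓ M).subgroupOf G,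
      σ' h = σ ⟨((h : G) : L), (Subgroup.mem_inf.mp (Subgroup.mem_subgroupOf.mp h.2)).2⟩)
    (hf₀ : IsHeckeFun ((G ⊓ M).subgroupOf G) σ' f₀)
    (hr : ∀ x, x⁻¹ * r x ∈ σ.ker.map M.subtype) {x : L} {g : G}
    (h : x⁻¹ * g ∈ σ.ker.map M.subtype) : f₀ (r x) = f₀ g := by
  refine (hf₀.apply_eq_of_inv_mul_mem_map_subtype_ker hσ' ?_).symm
  have e : (r x : L)⁻¹ * g = (x⁻¹ * r x)⁻¹ * (x⁻¹ * g) := by group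
  rw [e]
  exact mul_mem (inv_mem (hr x)) h

variable [TopologicalSpace L] [IsTopologicalGroup L]

theorem IsHeckeFun.comp_apply_mul (hG : Dense (G : Set L))
    (hker : IsOpen (σ.ker.map M.subtype : Set L))
    (hσ' : ∀ h : (G ⊓ M).subgroupOf G,
      σ' h = σ ⟨((h : G) : L), (Subgroup.mem_inf.mp (Subgroup.mem_subgroupOf.mp h.2)).2⟩)
    (hf₀ : IsHeckeFun ((G ⊓ M).subgroupOf G) σ' f₀)
    (hr : ∀ x, x⁻¹ * r x ∈ σ.ker.map M.subtype) (x : L) (n : M) :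
    f₀ (r (x * n)) = f₀ (r x) * σ n := by
  obtain ⟨b, hbG, hnb⟩ := hG.exists_mem_inv_mul_mem hker (one_mem _) n
  have hbM : b ∈ M := mem_of_inv_mul_mem_map_subtype_ker n.2 hnb
  have hxb : (x * n)⁻¹ * (r x * b) ∈ σ.ker.map M.subtype := by
    have e : (x * n)⁻¹ * (r x * b) =
        (n : L)⁻¹ * (x⁻¹ * r x) * (n : L)⁻¹⁻¹ * ((n : L)⁻¹ * b) := by group
    rw [e]
    exact mul_mem (mul_mul_inv_mem_map_subtype_ker (inv_mem n.2) (hr x)) hnb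
  rw [hf₀.comp_eq_of_inv_mul_mem_map_subtype_ker hσ' hr (g := r x * ⟨b, hbG⟩) hxb,
    hf₀.apply_mul (r x) ⟨⟨b, hbG⟩, Subgroup.mem_subgroupOf.2 ⟨hbG, hbM⟩⟩, hσ',
    map_eq_of_inv_mul_mem_map_subtype_ker (m := n) (a := ⟨b, hbM⟩) hnb]

theorem IsHeckeFun.comp_mul_apply (hG : Dense (G : Set L))
    (hker : IsOpen (σ.ker.map M.subtype : Set L))
    (hσ' : ∀ h : (G ⊓ M).subgroupOf G,
      σ' h = σ ⟨((h : G) : L), (Subgroup.mem_inf.mp (Subgroup.mem_subgroupOf.mp h.2)).2⟩)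
    (hf₀ : IsHeckeFun ((G ⊓ M).subgroupOf G) σ' f₀)
    (hr : ∀ x, x⁻¹ * r x ∈ σ.ker.map M.subtype) (m : M) (x : L) :
    f₀ (r (m * x)) = σ m * f₀ (r x) := by
  set K := σ.ker.map M.subtype
  -- `a` must lie in `mK` and also be close enough to `m` that `a * r x ∈ m x K`.
  have hU : IsOpen {u : L | u ∈ K ∧ (r x : L)⁻¹ * u⁻¹ * x ∈ K} :=
    hker.inter (hker.preimage (by fun_prop))
  obtain ⟨a, haG, hma, hax⟩ := hG.exists_mem_inv_mul_mem hU
    ⟨one_mem _, by simpa using inv_mem (hr x)⟩ m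
  have haM : a ∈ M := mem_of_inv_mul_mem_map_subtype_ker m.2 hma
  have hxa : (m * x)⁻¹ * (a * r x) ∈ K := by
    have e : (m * x)⁻¹ * (a * r x) = ((r x : L)⁻¹ * ((m : L)⁻¹ * a)⁻¹ * x)⁻¹ := by group
    rw [e]
    exact inv_mem hax
  rw [hf₀.comp_eq_of_inv_mul_mem_map_subtype_ker hσ' hr (g := ⟨a, haG⟩ * r x) hxa,
    hf₀.mul_apply ⟨⟨a, haG⟩, Subgroup.mem_subgroupOf.2 ⟨haG, haM⟩⟩, hσ',
    map_eq_of_inv_mul_mem_map_subtype_ker (m := m) (a := ⟨a, haM⟩) hma]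

theorem IsHeckeFun.comp_of_inv_mul_mem_map_subtype_ker (hG : Dense (G : Set L))
    (hker : IsOpen (σ.ker.map M.subtype : Set L))
    (hσ' : ∀ h : (G ⊓ M).subgroupOf G,
      σ' h = σ ⟨((h : G) : L), (Subgroup.mem_inf.mp (Subgroup.mem_subgroupOf.mp h.2)).2⟩)
    (hf₀ : IsHeckeFun ((G ⊓ M).subgroupOf G) σ' f₀)
    (hr : ∀ x, x⁻¹ * r x ∈ σ.ker.map M.subtype) : IsHeckeFun M σ (fun x => f₀ (r x)) := by
  refine ⟨fun m n x => ?_, ?_⟩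
  · show f₀ (r (m * x * n)) = σ m * f₀ (r x) * σ n
    rw [mul_assoc, hf₀.comp_mul_apply hG hker hσ' hr, hf₀.comp_apply_mul hG hker hσ' hr,
      mul_assoc]
  classical
  obtain ⟨F, hF⟩ := hf₀.2
  refine ⟨F.image (↑), fun y hy => ?_⟩
  obtain ⟨z, hzF, a, b, hzab⟩ := hF (r y) hy
  have hry : (r y : L)⁻¹ * y ∈ M := by
    simpa using Subgroup.map_subtype_le _ (inv_mem (hr y))
  refine ⟨z, Finset.mem_image_of_mem _ hzF, ⟨a, (Subgroup.mem_subgroupOf.1 a.2).2⟩,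
    ⟨b * ((r y : L)⁻¹ * y), mul_mem (Subgroup.mem_subgroupOf.1 b.2).2 hry⟩, ?_⟩
  have hzab' : (r y : L) = a * z * b := by simpa using congrArg Subtype.val hzab
  calc y = (r y : L) * ((r y : L)⁻¹ * y) := by group
    _ = a * z * (b * ((r y : L)⁻¹ * y)) := by rw [hzab']; group

end Extension

section Cosets

variable {L : Type*} [Group L] [TopologicalSpace L] [IsTopologicalGroup L] {M G : Subgroup L}

theorem exists_unique_inv_mul_mem_of_dense (hMo : IsOpen (M : Set L)) (hG : Dense (G : Set L))
    {R : Set L} (hRG : R ⊆ G) (hR : ∀ y ∈ G, ∃! r : L, r ∈ R ∧ r⁻¹ * y ∈ G ⊓ M) (y : L) :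
    ∃! r : L, r ∈ R ∧ r⁻¹ * y ∈ M := by
  obtain ⟨g, hgG, hyg⟩ := hG.exists_mem_inv_mul_mem hMo M.one_mem y
  obtain ⟨r, ⟨hrR, hrg⟩, -⟩ := hR g hgG
  have hry : r⁻¹ * y = (r⁻¹ * g) * (y⁻¹ * g)⁻¹ := by group
  refine ⟨r, ⟨hrR, hry ▸ mul_mem (Subgroup.mem_inf.1 hrg).2 (inv_mem hyg)⟩,
    fun r' ⟨hr'R, hr'y⟩ => ?_⟩
  have hr'g : r'⁻¹ * g ∈ G ⊓ M := by
    have e : r'⁻¹ * g = (r'⁻¹ * y) * (y⁻¹ * g) := by group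
    exact Subgroup.mem_inf.2 ⟨mul_mem (inv_mem (hRG hr'R)) hgG, e ▸ mul_mem hr'y hyg⟩
  exact (hR g hgG).unique ⟨hr'R, hr'g⟩ ⟨hrR, hrg⟩

theorem exists_finset_forall_mul_mem (hMc : IsCompact (M : Set L)) (hMo : IsOpen (M : Set L))
    (x : L) : ∃ t : Finset L, ∀ m n : M, ∃ z ∈ t, z * (m * x * n) ∈ M := by
  have hC : IsCompact ((fun p : L × L => p.1 * x * p.2) '' (M ×ˢ M : Set (L × L))) :=
    (hMc.prod hMc).image (by fun_prop)
  obtain ⟨t, ht⟩ := compact_covered_by_mul_left_translates hC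
    (hMo.interior_eq.symm ▸ ⟨1, M.one_mem⟩ : (interior (M : Set L)).Nonempty)
  refine ⟨t, fun m n => ?_⟩
  obtain ⟨z, hz, hzM⟩ := Set.mem_iUnion₂.1 (ht ⟨(m, n), ⟨m.2, n.2⟩, rfl⟩)
  exact ⟨z, hz, hzM⟩

variable {V : Type*} [NormedAddCommGroup V] [InnerProductSpace ℂ V] {σ : M →* (V →L[ℂ] V)}

theorem IsHeckeFun.finite_setOf_apply_ne_zero (hMc : IsCompact (M : Set L))
    (hMo : IsOpen (M : Set L)) {f : L → (V →L[ℂ] V)} (hf : IsHeckeFun M σ f) {R : Set L}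
    (hR : ∀ y, ∃! r : L, r ∈ R ∧ r⁻¹ * y ∈ M) : {r ∈ R | f r ≠ 0}.Finite := by
  obtain ⟨F, hF⟩ := hf.2
  choose t ht using exists_finset_forall_mul_mem hMc hMo
  refine ((F.finite_toSet.biUnion fun x _ => (t x).finite_toSet.biUnion fun z _ =>
    Set.Subsingleton.finite (s := {r ∈ R | z * r ∈ M}) ?_)).subset ?_
  · rintro r ⟨hrR, hzr⟩ r' ⟨hr'R, hzr'⟩
    exact (hR z⁻¹).unique ⟨hrR, by simpa using M.inv_mem hzr⟩
      ⟨hr'R, by simpa using M.inv_mem hzr'⟩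
  · rintro r ⟨hrR, hfr⟩
    obtain ⟨x, hxF, m, n, rfl⟩ := hF r hfr
    obtain ⟨z, hzt, hz⟩ := ht x m n
    exact Set.mem_biUnion hxF (Set.mem_biUnion hzt ⟨hrR, hz⟩)

end Cosets

theorem integral_eq_finsum_of_right_invariant {L E : Type*} [Group L] [MeasurableSpace L]
    [MeasurableMul L] [NormedAddCommGroup E] [NormedSpace ℝ E] [CompleteSpace E]
    (μ : Measure L) [μ.IsMulLeftInvariant] {M : Subgroup L} (hM : MeasurableSet (M : Set L))
    (hμM : μ M = 1) {R : Set L} (hR : ∀ y, ∃! r : L, r ∈ R ∧ r⁻¹ * y ∈ M) {F : L → E}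
    (hF : ∀ y (m : M), F (y * m) = F y) (hfin : {r ∈ R | F r ≠ 0}.Finite) :
    ∫ y, F y ∂μ = ∑ᶠ r ∈ R, F r := by
  classical
  replace hfin : (R ∩ Function.support F).Finite := hfin
  set T := hfin.toFinset
  have hmeas : ∀ r : L, MeasurableSet {y : L | r⁻¹ * y ∈ M} := fun r => measurable_const_mul _ hM
  have hμ : ∀ r : L, μ {y : L | r⁻¹ * y ∈ M} = 1 := fun r => by
    rw [← hμM]; exact measure_preimage_mul μ r⁻¹ M
  have hdecomp : ∀ y, F y = ∑ r ∈ T, {y : L | r⁻¹ * y ∈ M}.indicator (fun _ => F r) y := by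
    intro y
    obtain ⟨r₀, ⟨hr₀R, hr₀y⟩, hr₀⟩ := hR y
    have hFy : F y = F r₀ := by simpa using hF r₀ ⟨_, hr₀y⟩
    have hterm : ∀ r ∈ T, {y : L | r⁻¹ * y ∈ M}.indicator (fun _ => F r) y =
        if r = r₀ then F r else 0 := fun r hr => by
      by_cases hry : r⁻¹ * y ∈ M
      · rw [Set.indicator_of_mem (show y ∈ {y : L | r⁻¹ * y ∈ M} from hry),
          if_pos (hr₀ r ⟨(hfin.mem_toFinset.1 hr).1, hry⟩)]
      · rw [Set.indicator_of_notMem (show y ∉ {y : L | r⁻¹ * y ∈ M} from hry),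
          if_neg (by rintro rfl; exact hry hr₀y)]
    rw [Finset.sum_congr rfl hterm, Finset.sum_ite_eq', hFy]
    split_ifs with h
    · rfl
    · by_contra hne
      exact h (hfin.mem_toFinset.2 ⟨hr₀R, hne⟩)
  rw [integral_congr_ae (Filter.Eventually.of_forall hdecomp),
    integral_finsetSum _ fun r _ => (integrable_indicator_iff (hmeas r)).2
      (integrableOn_const (by simp [hμ r])),
    finsum_mem_eq_sum _ hfin]
  refine Finset.sum_congr rfl fun r _ => ?_
  rw [integral_indicator_const _ (hmeas r), measureReal_def, hμ r, ENNReal.toReal_one, one_smul]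

theorem stmt_2_general {L : Type*} [Group L] [TopologicalSpace L] [IsTopologicalGroup L]
    [MeasurableSpace L] [BorelSpace L]
    {V : Type*} [NormedAddCommGroup V] [InnerProductSpace ℂ V] [FiniteDimensional ℂ V]
    (M G : Subgroup L) (hMc : IsCompact (M : Set L)) (hMo : IsOpen (M : Set L))
    (hG : Dense (G : Set L))
    (σ : M →* (V →L[ℂ] V))
    (hker : IsOpen {x : L | ∃ h : x ∈ M, σ ⟨x, h⟩ = 1})
    (σ' : ((G ⊓ M).subgroupOf G) →* (V →L[ℂ] V))
    (hσ' : ∀ h : (G ⊓ M).subgroupOf G,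
      σ' h = σ ⟨((h : G) : L), (Subgroup.mem_inf.mp (Subgroup.mem_subgroupOf.mp h.2)).2⟩)
    (μ : Measure L) [μ.IsHaarMeasure] (hμM : μ (M : Set L) = 1) :
    Set.BijOn (fun (f : L → (V →L[ℂ] V)) => fun g : G => f (g : L))
      {f | IsHeckeFun M σ f} {f | IsHeckeFun ((G ⊓ M).subgroupOf G) σ' f} ∧
    (∀ f g : L → (V →L[ℂ] V), IsHeckeFun M σ f → IsHeckeFun M σ g →
      ∀ x : L, x ∈ G → ∀ R : Set L, R ⊆ (G : Set L) →
        (∀ y ∈ G, ∃! r : L, r ∈ R ∧ r⁻¹ * y ∈ G ⊓ M) →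
        {r ∈ R | f r * g (r⁻¹ * x) ≠ 0}.Finite ∧
        ∫ y, f y * g (y⁻¹ * x) ∂μ = ∑ᶠ r ∈ R, f r * g (r⁻¹ * x)) := by
  rw [← coe_map_subtype_ker] at hker
  refine ⟨⟨fun f hf => hf.restrict hMo hG hσ',
    fun f hf f' hf' h => hf.eq_of_restrict_eq hG hker hf' (congrFun h), fun f₀ hf₀ => ?_⟩, ?_⟩
  · choose r hrG hr using hG.exists_mem_inv_mul_mem hker (one_mem _)
    refine ⟨fun x => f₀ ⟨r x, hrG x⟩,
      hf₀.comp_of_inv_mul_mem_map_subtype_ker hG hker hσ' (r := fun x => ⟨r x, hrG x⟩) hr,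
      funext fun g => hf₀.apply_eq_of_inv_mul_mem_map_subtype_ker hσ' (hr g)⟩
  · intro f g hf hg x _ R hRG hR
    have hR' := exists_unique_inv_mul_mem_of_dense hMo hG hRG hR
    have hfin : {r ∈ R | f r * g (r⁻¹ * x) ≠ 0}.Finite :=
      (hf.finite_setOf_apply_ne_zero hMc hMo hR').subset fun r ⟨hrR, hr⟩ =>
        ⟨hrR, fun h => hr (by rw [h, zero_mul])⟩
    exact ⟨hfin, integral_eq_finsum_of_right_invariant μ hMo.measurableSet hμM hR'
      (fun y m => hf.conv_integrand_mul_right hg x y m) hfin⟩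

/-- Let `L` be a topological group, `M` a compact open subgroup, `G` a
dense subgroup, `H = G ⊓ M`, and `σ : M → B(V)` a continuous unitary representation on a
finite-dimensional complex inner product space whose kernel is open in `L`.  Then
restriction `f ↦ f|_G` is a bijection from `H_σ(L, M)` onto `H_{σ|H}(G, H)`.  Moreover, if
`L` is locally compact Hausdorff and `μ` is a left Haar measure with `μ M = 1`, then for
`f, g ∈ H_σ(L, M)` and `x ∈ G`, the convolution `∫ f(y) ∘ g(y⁻¹ x) dμ(y)` equals the finite
sum `Σ_{r ∈ R} f r ∘ g (r⁻¹ x)` over any set `R ⊆ G` of representatives of the left cosets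
of `H` in `G`. -/
theorem stmt_2 {L : Type*} [Group L] [TopologicalSpace L] [IsTopologicalGroup L]
    [LocallyCompactSpace L] [T2Space L] [MeasurableSpace L] [BorelSpace L]
    {V : Type*} [NormedAddCommGroup V] [InnerProductSpace ℂ V] [FiniteDimensional ℂ V]
    (M G : Subgroup L) (hMc : IsCompact (M : Set L)) (hMo : IsOpen (M : Set L))
    (hG : Dense (G : Set L))
    (σ : M →* (V →L[ℂ] V)) (hσc : Continuous σ) (hσu : ∀ m : M, σ m ∈ unitary (V →L[ℂ] V))
    (hker : IsOpen {x : L | ∃ h : x ∈ M, σ ⟨x, h⟩ = 1})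
    (σ' : ((G ⊓ M).subgroupOf G) →* (V →L[ℂ] V))
    (hσ' : ∀ h : (G ⊓ M).subgroupOf G,
      σ' h = σ ⟨((h : G) : L), (Subgroup.mem_inf.mp (Subgroup.mem_subgroupOf.mp h.2)).2⟩)
    (μ : Measure L) [μ.IsHaarMeasure] (hμM : μ (M : Set L) = 1) :
    Set.BijOn (fun (f : L → (V →L[ℂ] V)) => fun g : G => f (g : L))
      {f | IsHeckeFun M σ f} {f | IsHeckeFun ((G ⊓ M).subgroupOf G) σ' f} ∧
    (∀ f g : L → (V →L[ℂ] V), IsHeckeFun M σ f → IsHeckeFun M σ g →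
      ∀ x : L, x ∈ G → ∀ R : Set L, R ⊆ (G : Set L) →
        (∀ y ∈ G, ∃! r : L, r ∈ R ∧ r⁻¹ * y ∈ G ⊓ M) →
        {r ∈ R | f r * g (r⁻¹ * x) ≠ 0}.Finite ∧
        ∫ y, f y * g (y⁻¹ * x) ∂μ = ∑ᶠ r ∈ R, f r * g (r⁻¹ * x)) :=
  stmt_2_general M G hMc hMo hG σ hker σ' hσ' μ hμM
end

section
/- Let L be a locally compact Hausdorff topological group with left Haar measure μ, M a compact open subgroup with μ(M) = 1, V a finite-dimensional complex inner product space, and σ : M → B(V) a continuous homomorphism into the unitary operators on V. Let f, g : L → B(V) be compactly supported functions satisfying f(mxn) = σ(m) ∘ f(x) ∘ σ(n) and g(mxn) = σ(m) ∘ g(x) ∘ σ(n) for all m, n ∈ M, x ∈ L. Then for every x ∈ L and every set R ⊆ L containing exactly one element of each left coset yM of M in L, one has ∫_L f(y) ∘ g(y⁻¹x) dμ(y) = Σ_{r ∈ R} f(r) ∘ g(r⁻¹x), the sum having only finitely many nonzero terms, and this value is independent of the choice of R. -/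
/-!
A bi-`(M, σ)`-equivariant `f` and `g` make the integrand `y ↦ f y * g (y⁻¹ * x)` invariant
under right translation by `M`, since the factors `σ m` and `σ m⁻¹` cancel. A right
`M`-invariant function is constant on the open cosets `r • M`, each of measure `μ M = 1`, so its
integral is the sum of its values at coset representatives; compactness of the support makes it
meet only finitely many cosets, because `G ⧸ M` is discrete.
-/

open MeasureTheory Pointwise

theorem mul_apply_inv_mul_mul_right_eq {G A : Type*} [Group G] [Monoid A] {M : Subgroup G}
    (σ : M →* A) {f g : G → A} (hf : ∀ (m : M) (y : G), f (y * m) = f y * σ m)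
    (hg : ∀ (m : M) (z : G), g (m * z) = σ m * g z) (x y : G) (m : M) :
    f (y * m) * g ((y * m)⁻¹ * x) = f y * g (y⁻¹ * x) := by
  have hinv : (y * m)⁻¹ * x = ((m⁻¹ : M) : G) * (y⁻¹ * x) := by simp [mul_assoc]
  rw [hf, hinv, hg, mul_assoc, ← mul_assoc (σ m), ← map_mul, mul_inv_cancel, map_one, one_mul]

namespace Subgroup

variable {G : Type*} [Group G] {M : Subgroup G} {R : Set G}

theorem isComplement_of_existsUnique_inv_mul_mem
    (hR : ∀ y : G, ∃! r : G, r ∈ R ∧ r⁻¹ * y ∈ M) : IsComplement R M :=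
  isComplement_iff_existsUnique_inv_mul_mem.2 fun y =>
    let ⟨r, ⟨hrR, hry⟩, huniq⟩ := hR y
    ⟨⟨r, hrR⟩, hry, fun s hs => Subtype.ext (huniq s ⟨s.2, hs⟩)⟩

theorem IsComplement.injOn_quotientGroupMk (hR : IsComplement R M) :
    Set.InjOn (QuotientGroup.mk : G → G ⧸ M) R :=
  Set.injOn_iff_injective.2 (isComplement_subgroup_right_iff_bijective.1 hR).1

theorem IsComplement.finite_inter_of_isCompact [TopologicalSpace G] [ContinuousMul G]
    (hR : IsComplement R M) (hMo : IsOpen (M : Set G)) {K : Set G} (hK : IsCompact K) :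
    (R ∩ K).Finite := by
  have : DiscreteTopology (G ⧸ M) := QuotientGroup.discreteTopology hMo
  have hfin : ((QuotientGroup.mk : G → G ⧸ M) '' K).Finite :=
    (hK.image QuotientGroup.continuous_mk).finite_of_discrete
  exact (hfin.subset (Set.image_mono Set.inter_subset_right)).of_finite_image
    (hR.injOn_quotientGroupMk.mono Set.inter_subset_left)

theorem IsComplement.finite_inter_support [TopologicalSpace G] [ContinuousMul G] {E : Type*}
    [Zero E] {h : G → E} (hR : IsComplement R M) (hMo : IsOpen (M : Set G))
    (hc : HasCompactSupport h) : (R ∩ Function.support h).Finite :=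
  (hR.finite_inter_of_isCompact hMo hc).subset (Set.inter_subset_inter_right R (subset_tsupport h))

end Subgroup

section RightInvariant

variable {G E : Type*} [Group G] {M : Subgroup G} {h : G → E}

theorem eq_of_inv_mul_mem_of_mul_right_eq (hh : ∀ (y : G) (m : M), h (y * m) = h y) {r y : G}
    (hy : r⁻¹ * y ∈ M) : h y = h r := by
  simpa using hh r ⟨_, hy⟩

theorem isLocallyConstant_of_mul_right_eq [TopologicalSpace G] [ContinuousMul G]
    (hMo : IsOpen (M : Set G)) (hh : ∀ (y : G) (m : M), h (y * m) = h y) :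
    IsLocallyConstant h :=
  (IsLocallyConstant.iff_exists_open h).2 fun y =>
    ⟨y • (M : Set G), hMo.smul y, ⟨1, M.one_mem, mul_one y⟩, fun _ hz =>
      eq_of_inv_mul_mem_of_mul_right_eq hh (mem_leftCoset_iff y |>.1 hz)⟩

variable [TopologicalSpace G] [ContinuousMul G] [MeasurableSpace G] [OpensMeasurableSpace G]
  [NormedAddCommGroup E] [NormedSpace ℝ E] [CompleteSpace E] {μ : Measure G}

theorem setIntegral_smul_of_mul_right_eq [μ.IsMulLeftInvariant] (hMo : IsOpen (M : Set G))
    (hμM : μ (M : Set G) = 1) (hh : ∀ (y : G) (m : M), h (y * m) = h y) (r : G) :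
    ∫ y in r • (M : Set G), h y ∂μ = h r := by
  have hconst : Set.EqOn h (fun _ => h r) (r • (M : Set G)) := fun _ hy =>
    eq_of_inv_mul_mem_of_mul_right_eq hh ((mem_leftCoset_iff r).1 hy)
  rw [setIntegral_congr_fun (hMo.smul r).measurableSet hconst, setIntegral_const,
    measureReal_def, measure_smul, hμM, ENNReal.toReal_one, one_smul]

theorem integral_eq_finsum_of_mul_right_eq [μ.IsMulLeftInvariant] [IsFiniteMeasureOnCompacts μ]
    {R : Set G} (hR : Subgroup.IsComplement R M) (hMo : IsOpen (M : Set G))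
    (hμM : μ (M : Set G) = 1) (hh : ∀ (y : G) (m : M), h (y * m) = h y)
    (hc : HasCompactSupport h) :
    ∫ y, h y ∂μ = ∑ᶠ r ∈ R, h r := by
  have hfin := hR.finite_inter_support hMo hc
  set S := hfin.toFinset
  have hzero : ∀ y ∉ ⋃ r ∈ S, r • (M : Set G), h y = 0 := by
    intro y hy
    by_contra hy0
    obtain ⟨r, hry, -⟩ := Subgroup.isComplement_iff_existsUnique_inv_mul_mem.1 hR y
    have hr : (r : G) ∈ S := by
      rw [Set.Finite.mem_toFinset]
      exact ⟨r.2, (eq_of_inv_mul_mem_of_mul_right_eq hh hry).symm.trans_ne hy0⟩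
    exact hy (Set.mem_biUnion hr ((mem_leftCoset_iff _).2 hry))
  have hdisj : (S : Set G).Pairwise (Function.onFun Disjoint fun r => r • (M : Set G)) :=
    hR.pairwiseDisjoint_smul.subset fun r hr => (hfin.mem_toFinset.1 hr).1
  have hint : Integrable h μ :=
    (isLocallyConstant_of_mul_right_eq hMo hh).continuous.integrable_of_hasCompactSupport hc
  calc ∫ y, h y ∂μ = ∫ y in ⋃ r ∈ S, r • (M : Set G), h y ∂μ :=
        (setIntegral_eq_integral_of_forall_compl_eq_zero hzero).symm
    _ = ∑ r ∈ S, ∫ y in r • (M : Set G), h y ∂μ :=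
        integral_biUnion_finset S (fun r _ => (hMo.smul r).measurableSet) hdisj
          fun _ _ => hint.integrableOn
    _ = ∑ r ∈ S, h r :=
        Finset.sum_congr rfl fun r _ => setIntegral_smul_of_mul_right_eq hMo hμM hh r
    _ = ∑ᶠ r ∈ R, h r := (finsum_mem_eq_sum h hfin).symm

end RightInvariant

theorem stmt_4_general {L : Type*} [Group L] [TopologicalSpace L] [IsTopologicalGroup L]
    [MeasurableSpace L] [BorelSpace L]
    {V : Type*} [NormedAddCommGroup V] [InnerProductSpace ℂ V] [FiniteDimensional ℂ V]
    (μ : Measure L) [μ.IsHaarMeasure]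
    (M : Subgroup L) (hMo : IsOpen (M : Set L))
    (hμM : μ (M : Set L) = 1)
    (σ : M →* (V →L[ℂ] V))
    (f g : L → (V →L[ℂ] V)) (hfc : HasCompactSupport f)
    (hf : ∀ (m n : M) (x : L), f ((m : L) * x * (n : L)) = σ m * f x * σ n)
    (hg : ∀ (m n : M) (x : L), g ((m : L) * x * (n : L)) = σ m * g x * σ n)
    (x : L) (R : Set L) (hR : ∀ y : L, ∃! r : L, r ∈ R ∧ r⁻¹ * y ∈ M) :
    {r ∈ R | f r * g (r⁻¹ * x) ≠ 0}.Finite ∧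
    ∫ y, f y * g (y⁻¹ * x) ∂μ = ∑ᶠ r ∈ R, f r * g (r⁻¹ * x) := by
  have hRM := Subgroup.isComplement_of_existsUnique_inv_mul_mem hR
  have hinv : ∀ (y : L) (m : M), f (y * m) * g ((y * m)⁻¹ * x) = f y * g (y⁻¹ * x) :=
    mul_apply_inv_mul_mul_right_eq σ (fun m y => by simpa using hf 1 m y)
      (fun m z => by simpa using hg m 1 z) x
  have hc : HasCompactSupport fun y => f y * g (y⁻¹ * x) := hfc.mul_right
  exact ⟨hRM.finite_inter_support hMo hc,
    integral_eq_finsum_of_mul_right_eq hRM hMo hμM hinv hc⟩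

/-- Let `L` be a locally compact Hausdorff group with left Haar measure `μ`,
`M` a compact open subgroup with `μ M = 1`, `σ : M → B(V)` a continuous unitary
representation on a finite-dimensional complex inner product space `V`, and `f, g` compactly
supported bi-`(M,σ)`-equivariant functions `L → B(V)`.  Then for every `x ∈ L` and every set
`R` of representatives of the left cosets of `M` (exactly one element in each coset `y M`),
the convolution `∫ f(y) ∘ g(y⁻¹ x) dμ(y)` equals `Σ_{r ∈ R} f r ∘ g (r⁻¹ x)`, a sum with
finitely many nonzero terms. -/
theorem stmt_4 {L : Type*} [Group L] [TopologicalSpace L] [IsTopologicalGroup L]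
    [LocallyCompactSpace L] [T2Space L] [MeasurableSpace L] [BorelSpace L]
    {V : Type*} [NormedAddCommGroup V] [InnerProductSpace ℂ V] [FiniteDimensional ℂ V]
    (μ : Measure L) [μ.IsHaarMeasure]
    (M : Subgroup L) (hMc : IsCompact (M : Set L)) (hMo : IsOpen (M : Set L))
    (hμM : μ (M : Set L) = 1)
    (σ : M →* (V →L[ℂ] V)) (hσc : Continuous σ) (hσu : ∀ m : M, σ m ∈ unitary (V →L[ℂ] V))
    (f g : L → (V →L[ℂ] V)) (hfc : HasCompactSupport f) (hgc : HasCompactSupport g)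
    (hf : ∀ (m n : M) (x : L), f ((m : L) * x * (n : L)) = σ m * f x * σ n)
    (hg : ∀ (m n : M) (x : L), g ((m : L) * x * (n : L)) = σ m * g x * σ n)
    (x : L) (R : Set L) (hR : ∀ y : L, ∃! r : L, r ∈ R ∧ r⁻¹ * y ∈ M) :
    {r ∈ R | f r * g (r⁻¹ * x) ≠ 0}.Finite ∧
    ∫ y, f y * g (y⁻¹ * x) ∂μ = ∑ᶠ r ∈ R, f r * g (r⁻¹ * x) :=
  stmt_4_general μ M hMo hμM σ f g hfc hf hg x R hR
end

section
/- Let L be a locally compact Hausdorff topological group with left Haar measure μ, M a compact open subgroup with μ(M) = 1, V a finite-dimensional complex inner product space, σ : M → B(V) a continuous homomorphism into the unitary operators on V, and p : L → B(V) given by p(x) = σ(x) for x ∈ M, p(x) = 0 otherwise. Then for every continuous compactly supported f : L → B(V), the following are equivalent: (a) for every z ∈ L, ∫_L ∫_L p(y) ∘ f(w) ∘ p(w⁻¹y⁻¹z) dμ(w) dμ(y) = f(z) (i.e. p ⋆ f ⋆ p = f); (b) f(mxn) = σ(m) ∘ f(x) ∘ σ(n) for all m, n ∈ M, x ∈ L.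 -/
/-!
Both directions rest on the identity `p (m * y * n) = σ m * p y * σ n` for `m n ∈ M` and on the
left invariance of `μ`. Substituting `y ↦ m * y` in `p ⋆ f ⋆ p` shows that `p ⋆ f ⋆ p` is always
bi-`(M, σ)`-equivariant, which gives (a) ⇒ (b). Conversely, for bi-equivariant `f` and `y ∈ M`, the
substitution `w ↦ y⁻¹ * z * w` turns the inner integrand into `f z` on `M` and `0` off `M`, so
`p ⋆ f ⋆ p = μ(M)² • f = f`.
-/

open MeasureTheory

theorem integral_units_mul_mul {X R : Type*} [MeasurableSpace X] {μ : Measure X} [NormedRing R]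
    [NormedAlgebra ℝ R] (a b : Rˣ) (φ : X → R) :
    ∫ x, a * φ x * b ∂μ = a * (∫ x, φ x ∂μ) * b :=
  (ContinuousLinearEquiv.equivOfInverse (ContinuousLinearMap.mulLeftRight ℝ R a b)
    (ContinuousLinearMap.mulLeftRight ℝ R ↑a⁻¹ ↑b⁻¹)
    (fun x => by simp [mul_assoc]) (fun x => by simp [mul_assoc])).integral_comp_comm φ

section ExtensionByZero

variable {G R : Type*} [Group G] {M : Subgroup G}

def IsExtensionByZero [MonoidWithZero R] (σ : M →* R) (p : G → R) : Prop :=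
  ∀ y : G, (∀ h : y ∈ M, p y = σ ⟨y, h⟩) ∧ (y ∉ M → p y = 0)

def IsBiEquivariant [MulOneClass R] (σ : M →* R) (f : G → R) : Prop :=
  ∀ (m n : M) (x : G), f (m * x * n) = σ m * f x * σ n

namespace IsExtensionByZero

variable [MonoidWithZero R] {σ : M →* R} {p : G → R}

theorem apply_of_mem (hp : IsExtensionByZero σ p) {y : G} (hy : y ∈ M) : p y = σ ⟨y, hy⟩ :=
  (hp y).1 hy

theorem apply_of_notMem (hp : IsExtensionByZero σ p) {y : G} (hy : y ∉ M) : p y = 0 :=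
  (hp y).2 hy

theorem apply_mul_left (hp : IsExtensionByZero σ p) (m : M) (y : G) :
    p (m * y) = σ m * p y := by
  by_cases hy : y ∈ M
  · rw [hp.apply_of_mem hy, hp.apply_of_mem (M.mul_mem m.2 hy), ← map_mul]
    rfl
  · rw [hp.apply_of_notMem hy, hp.apply_of_notMem (by rwa [M.mul_mem_cancel_left m.2]), mul_zero]

theorem apply_mul_right (hp : IsExtensionByZero σ p) (y : G) (n : M) :
    p (y * n) = p y * σ n := by
  by_cases hy : y ∈ M
  · rw [hp.apply_of_mem hy, hp.apply_of_mem (M.mul_mem hy n.2), ← map_mul]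
    rfl
  · rw [hp.apply_of_notMem hy, hp.apply_of_notMem (by rwa [M.mul_mem_cancel_right n.2]),
      zero_mul]

end IsExtensionByZero

end ExtensionByZero

section SandwichConv

variable {G R : Type*} [Group G] [MeasurableSpace G] [MeasurableMul G] [NormedRing R]
  [NormedAlgebra ℝ R] (μ : Measure G) [μ.IsMulLeftInvariant]

/-- The twofold convolution `p ⋆ f ⋆ p`. -/
noncomputable def sandwichConv (p f : G → R) (z : G) : R :=
  ∫ y, ∫ w, p y * f w * p (w⁻¹ * (y⁻¹ * z)) ∂μ ∂μ

variable {M : Subgroup G} {σ : M →* R} {p : G → R}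

theorem isBiEquivariant_sandwichConv (hp : IsExtensionByZero σ p) (f : G → R) :
    IsBiEquivariant σ (sandwichConv μ p f) := by
  intro m n x
  have hconj (y w : G) : p (m * y) * f w * p (w⁻¹ * ((m * y)⁻¹ * (m * x * n))) =
      σ m * (p y * f w * p (w⁻¹ * (y⁻¹ * x))) * σ n := by
    rw [show w⁻¹ * ((m * y)⁻¹ * (m * x * n)) = w⁻¹ * (y⁻¹ * x) * n by group,
      hp.apply_mul_left, hp.apply_mul_right]
    noncomm_ring
  calc sandwichConv μ p f (m * x * n)
      = ∫ y, ∫ w, p (m * y) * f w * p (w⁻¹ * ((m * y)⁻¹ * (m * x * n))) ∂μ ∂μ :=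
        (integral_mul_left_eq_self _ (m : G)).symm
    _ = ∫ y, ∫ w, σ.toHomUnits m * (p y * f w * p (w⁻¹ * (y⁻¹ * x))) * σ.toHomUnits n ∂μ ∂μ := by
        simp only [hconj, MonoidHom.coe_toHomUnits]
    _ = σ m * sandwichConv μ p f x * σ n := by
        simp_rw [integral_units_mul_mul]
        rfl

variable [CompleteSpace R]

theorem integral_extensionByZero_mul_mul_of_mem (hp : IsExtensionByZero σ p)
    (hM : MeasurableSet (M : Set G)) {f : G → R} (hf : IsBiEquivariant σ f) {y : G} (hy : y ∈ M)
    (z : G) : ∫ w, p y * f w * p (w⁻¹ * (y⁻¹ * z)) ∂μ = μ.real M • f z := by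
  rw [← integral_mul_left_eq_self _ (y⁻¹ * z)]
  have hindicator : (fun w => p y * f (y⁻¹ * z * w) * p ((y⁻¹ * z * w)⁻¹ * (y⁻¹ * z))) =
      (M : Set G).indicator fun _ => f z := by
    ext1 w
    rw [show (y⁻¹ * z * w)⁻¹ * (y⁻¹ * z) = w⁻¹ by group]
    by_cases hw : w ∈ M
    · rw [Set.indicator_of_mem hw, hp.apply_of_mem hy, hp.apply_of_mem (M.inv_mem hw), ← hf]
      congr 1
      group
    · rw [Set.indicator_of_notMem hw, hp.apply_of_notMem (y := w⁻¹) (by rwa [M.inv_mem_iff]),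
        mul_zero]
  rw [hindicator, integral_indicator_const _ hM]

theorem sandwichConv_of_isBiEquivariant (hp : IsExtensionByZero σ p)
    (hM : MeasurableSet (M : Set G)) {f : G → R} (hf : IsBiEquivariant σ f) (z : G) :
    sandwichConv μ p f z = μ.real M • μ.real M • f z := by
  have hindicator : (fun y => ∫ w, p y * f w * p (w⁻¹ * (y⁻¹ * z)) ∂μ) =
      (M : Set G).indicator fun _ => μ.real M • f z := by
    ext1 y
    by_cases hy : y ∈ M
    · rw [Set.indicator_of_mem hy, integral_extensionByZero_mul_mul_of_mem μ hp hM hf hy]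
    · simp only [Set.indicator_of_notMem hy, hp.apply_of_notMem hy, zero_mul, integral_zero]
  rw [sandwichConv, hindicator, integral_indicator_const _ hM]

end SandwichConv

theorem stmt_6_general {L : Type*} [Group L] [TopologicalSpace L] [IsTopologicalGroup L]
    [MeasurableSpace L] [BorelSpace L]
    {V : Type*} [NormedAddCommGroup V] [InnerProductSpace ℂ V] [FiniteDimensional ℂ V]
    (μ : Measure L) [μ.IsHaarMeasure]
    (M : Subgroup L) (hMo : IsOpen (M : Set L))
    (hμM : μ (M : Set L) = 1)
    (σ : M →* (V →L[ℂ] V))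
    (p : L → (V →L[ℂ] V))
    (hp : ∀ y : L, (∀ h : y ∈ M, p y = σ ⟨y, h⟩) ∧ (y ∉ M → p y = 0))
    (f : L → (V →L[ℂ] V)) :
    (∀ z : L, ∫ y, ∫ w, p y * f w * p (w⁻¹ * (y⁻¹ * z)) ∂μ ∂μ = f z) ↔
    (∀ (m n : M) (x : L), f ((m : L) * x * (n : L)) = σ m * f x * σ n) := by
  have hp : IsExtensionByZero σ p := hp
  have hμM : μ.real M = 1 := by simp [measureReal_def, hμM]
  constructor
  · intro hfix
    have hfix : sandwichConv μ p f = f := funext hfix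
    exact hfix ▸ isBiEquivariant_sandwichConv μ hp f
  · intro hf z
    rw [← sandwichConv, sandwichConv_of_isBiEquivariant μ hp hMo.measurableSet hf, hμM, one_smul,
      one_smul]

/-- With `L`, `M`, `σ`, `μ`, `p` as in Statement 5, for every continuous
compactly supported `f : L → B(V)` the following are equivalent: (a) `p ⋆ f ⋆ p = f`, i.e.
`∫∫ p(y) ∘ f(w) ∘ p(w⁻¹ y⁻¹ z) dμ(w) dμ(y) = f z` for all `z`; (b) `f` is
bi-`(M,σ)`-equivariant: `f (m x n) = σ m ∘ f x ∘ σ n`. -/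
theorem stmt_6 {L : Type*} [Group L] [TopologicalSpace L] [IsTopologicalGroup L]
    [LocallyCompactSpace L] [T2Space L] [MeasurableSpace L] [BorelSpace L]
    {V : Type*} [NormedAddCommGroup V] [InnerProductSpace ℂ V] [FiniteDimensional ℂ V]
    (μ : Measure L) [μ.IsHaarMeasure]
    (M : Subgroup L) (hMc : IsCompact (M : Set L)) (hMo : IsOpen (M : Set L))
    (hμM : μ (M : Set L) = 1)
    (σ : M →* (V →L[ℂ] V)) (hσc : Continuous σ) (hσu : ∀ m : M, σ m ∈ unitary (V →L[ℂ] V))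
    (p : L → (V →L[ℂ] V))
    (hp : ∀ y : L, (∀ h : y ∈ M, p y = σ ⟨y, h⟩) ∧ (y ∉ M → p y = 0))
    (f : L → (V →L[ℂ] V)) (hfc : Continuous f) (hfs : HasCompactSupport f) :
    (∀ z : L, ∫ y, ∫ w, p y * f w * p (w⁻¹ * (y⁻¹ * z)) ∂μ ∂μ = f z) ↔
    (∀ (m n : M) (x : L), f ((m : L) * x * (n : L)) = σ m * f x * σ n) :=
  stmt_6_general μ M hMo hμM σ p hp f
end

section
/- Let L be a topological group, G a dense subgroup of L, M an open subgroup of L, and set H = G ∩ M. Then for every x ∈ G, the closure in L of the set H ∩ xHx⁻¹ equals M ∩ xMx⁻¹. -/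
/-! Since `x ∈ G`, the set `H ∩ xHx⁻¹` is `G ∩ (M ∩ xMx⁻¹)`. The subgroup `M ∩ xMx⁻¹` is open,
hence also closed, and intersecting the dense set `G` with an open set does not shrink its
closure below that open set. -/

theorem Dense.closure_inter_eq_of_isClopen {X : Type*} [TopologicalSpace X] {s t : Set X}
    (hs : Dense s) (ht : IsClopen t) : closure (s ∩ t) = t := by
  refine (closure_minimal Set.inter_subset_right ht.isClosed).antisymm ?_
  simpa only [Set.inter_comm t s] using hs.open_subset_closure_inter ht.isOpen

theorem Subgroup.isClopen_inter_conj_of_isOpen {L : Type*} [Group L] [TopologicalSpace L]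
    [IsTopologicalGroup L] {M : Subgroup L} (hM : IsOpen (M : Set L)) (x : L) :
    IsClopen {h : L | h ∈ M ∧ x⁻¹ * h * x ∈ M} := by
  have hM' : IsClopen (M : Set L) := ⟨M.isClosed_of_isOpen hM, hM⟩
  exact hM'.inter (hM'.preimage (by fun_prop))

theorem Subgroup.setOf_inf_conj_inf_eq {L : Type*} [Group L] (M G : Subgroup L) {x : L}
    (hx : x ∈ G) :
    {h : L | h ∈ G ⊓ M ∧ x⁻¹ * h * x ∈ G ⊓ M} =
      (G : Set L) ∩ {h : L | h ∈ M ∧ x⁻¹ * h * x ∈ M} := by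
  ext h
  have hconj : x⁻¹ * h * x ∈ G ↔ h ∈ G := by
    rw [G.mul_mem_cancel_right hx, G.mul_mem_cancel_left (G.inv_mem hx)]
  simp only [Set.mem_ofPred_eq, Subgroup.mem_inf, Set.mem_inter_iff, SetLike.mem_coe, hconj]
  tauto

/-- Let `L` be a topological group, `G` a dense subgroup, `M` an open
subgroup, `H = G ⊓ M`.  For every `x ∈ G`, the closure of `H ∩ x H x⁻¹` equals
`M ∩ x M x⁻¹` (an element `h` lies in `x A x⁻¹` iff `x⁻¹ h x ∈ A`). -/
theorem stmt_7 {L : Type*} [Group L] [TopologicalSpace L] [IsTopologicalGroup L]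
    (M G : Subgroup L) (hMo : IsOpen (M : Set L)) (hG : Dense (G : Set L))
    (x : L) (hx : x ∈ G) :
    closure {h : L | h ∈ G ⊓ M ∧ x⁻¹ * h * x ∈ G ⊓ M} =
      {h : L | h ∈ M ∧ x⁻¹ * h * x ∈ M} := by
  rw [Subgroup.setOf_inf_conj_inf_eq M G hx]
  exact hG.closure_inter_eq_of_isClopen (Subgroup.isClopen_inter_conj_of_isOpen hMo x)
end

section
/- Let L be a topological group, M an open subgroup of L, G a dense subgroup of L, H = G ∩ M, and σ : M → ℂ a continuous group homomorphism with |σ(m)| = 1 for all m ∈ M. Define B = {x ∈ G | σ(h) = σ(x⁻¹hx) for all h ∈ H ∩ xHx⁻¹} and B_L = {x ∈ L | σ(h) = σ(x⁻¹hx) for all h ∈ M ∩ xMx⁻¹}. Then B_L is open and closed in L, B_L ∩ G = B, and the closure of B in L equals B_L. -/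
/-!
Conjugating by `x * u` instead of `x`, with `u ∈ M`, changes the argument of `σ` by a
conjugation inside `M`, which a character with commutative values does not see. So `B_L` is a
union of cosets `x M` of the open subgroup `M`, hence clopen. For `x ∈ G`, the continuous maps
`h ↦ σ h` and `h ↦ σ (x⁻¹ h x)` on the open set `M ∩ x M x⁻¹` agree on its dense part inside `G`,
hence everywhere; so `B_L ∩ G = B`, and density of `G` in the open set `B_L` gives
`closure B = B_L`.
-/

open Pointwise

theorem MonoidHom.map_mul_mul_inv {M A : Type*} [Group M] [CommMonoid A] (σ : M →* A)
    (u y : M) : σ (u * y * u⁻¹) = σ y := by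
  rw [map_mul, map_mul, mul_right_comm, ← map_mul, mul_inv_cancel, map_one, one_mul]

theorem IsOpen.of_mul_subgroup_subset {L : Type*} [Group L] [TopologicalSpace L]
    [ContinuousConstSMul L L] {M : Subgroup L} (hM : IsOpen (M : Set L)) {S : Set L}
    (hS : S * M ⊆ S) : IsOpen S :=
  hS.antisymm (Set.subset_mul_left S M.one_mem) ▸ hM.mul_left

theorem IsClopen.of_mul_subgroup_subset {L : Type*} [Group L] [TopologicalSpace L]
    [ContinuousConstSMul L L] {M : Subgroup L} (hM : IsOpen (M : Set L)) {S : Set L}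
    (hS : S * M ⊆ S) : IsClopen S := by
  refine ⟨⟨.of_mul_subgroup_subset hM ?_⟩, .of_mul_subgroup_subset hM hS⟩
  rw [Set.mul_subset_iff]
  intro x hx u hu hxu
  exact hx (by simpa using Set.mul_subset_iff.mp hS _ hxu _ (M.inv_mem hu))

theorem IsClopen.closure_inter_dense {X : Type*} [TopologicalSpace X] {s t : Set X}
    (hs : IsClopen s) (ht : Dense t) : closure (s ∩ t) = s :=
  (closure_minimal Set.inter_subset_left hs.isClosed).antisymm
    (ht.open_subset_closure_inter hs.isOpen)

namespace Subgroup

variable {L A : Type*} [Group L] [CommMonoid A] {M : Subgroup L} (σ : M →* A)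

def compatibleSet : Set L :=
  {x | ∀ (h : L) (h1 : h ∈ M) (h2 : x⁻¹ * h * x ∈ M), σ ⟨h, h1⟩ = σ ⟨x⁻¹ * h * x, h2⟩}

theorem compatibleSet_mul_subset : compatibleSet σ * M ⊆ compatibleSet σ := by
  rw [Set.mul_subset_iff]
  intro x hx u hu h h1 h2
  have hconj : x⁻¹ * h * x = u * ((x * u)⁻¹ * h * (x * u)) * u⁻¹ := by group
  have h2' : x⁻¹ * h * x ∈ M := hconj ▸ M.mul_mem (M.mul_mem hu h2) (M.inv_mem hu)
  rw [hx h h1 h2', ← σ.map_mul_mul_inv ⟨u, hu⟩ ⟨_, h2⟩]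
  congr 1
  ext
  exact hconj

theorem isClopen_compatibleSet [TopologicalSpace L] [ContinuousConstSMul L L]
    (hM : IsOpen (M : Set L)) : IsClopen (compatibleSet σ) :=
  .of_mul_subgroup_subset hM (compatibleSet_mul_subset σ)

theorem mem_compatibleSet_of_dense [TopologicalSpace L] [ContinuousMul L]
    [TopologicalSpace A] [T2Space A] (hσ : Continuous σ) (hM : IsOpen (M : Set L))
    {G : Set L} (hG : Dense G) {x : L}
    (hx : ∀ (h : L) (h1 : h ∈ M) (h2 : x⁻¹ * h * x ∈ M), h ∈ G →
      σ ⟨h, h1⟩ = σ ⟨x⁻¹ * h * x, h2⟩) :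
    x ∈ compatibleSet σ := by
  let U : Set L := M ∩ (fun y => x⁻¹ * y * x) ⁻¹' M
  have hconj : Continuous fun y : L => x⁻¹ * y * x := by fun_prop
  have hU : IsOpen U := hM.inter (hM.preimage hconj)
  have hdense : Dense ((↑) ⁻¹' G : Set U) := hG.preimage hU.isOpenMap_subtype_val
  have key := Continuous.ext_on hdense (f := fun h : U => σ ⟨h, h.2.1⟩)
    (g := fun h : U => σ ⟨x⁻¹ * h * x, h.2.2⟩) (by fun_prop) (by fun_prop)
    fun h hG => hx h h.2.1 h.2.2 hG
  intro h h1 h2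
  exact congrFun key ⟨h, h1, h2⟩

end Subgroup

theorem stmt_8_general {L : Type*} [Group L] [TopologicalSpace L] [IsTopologicalGroup L]
    (M G : Subgroup L) (hMo : IsOpen (M : Set L)) (hG : Dense (G : Set L))
    (σ : M →* ℂ) (hσc : Continuous σ)
    (B BL : Set L)
    (hB : B = {x : L | x ∈ G ∧ ∀ (h : L) (h1 : h ∈ G ⊓ M) (h2 : x⁻¹ * h * x ∈ G ⊓ M),
      σ ⟨h, (Subgroup.mem_inf.mp h1).2⟩ = σ ⟨x⁻¹ * h * x, (Subgroup.mem_inf.mp h2).2⟩})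
    (hBL : BL = {x : L | ∀ (h : L) (h1 : h ∈ M) (h2 : x⁻¹ * h * x ∈ M),
      σ ⟨h, h1⟩ = σ ⟨x⁻¹ * h * x, h2⟩}) :
    IsOpen BL ∧ IsClosed BL ∧ BL ∩ (G : Set L) = B ∧ closure B = BL := by
  change BL = Subgroup.compatibleSet σ at hBL
  have hclopen := Subgroup.isClopen_compatibleSet σ hMo
  have hinter : BL ∩ G = B := by
    ext x
    simp only [hB, hBL, Set.mem_inter_iff, Set.mem_ofPred_eq, Subgroup.mem_inf]
    refine ⟨fun ⟨hx, hxG⟩ => ⟨hxG, fun h h1 h2 => hx h h1.2 h2.2⟩, fun ⟨hxG, hx⟩ => ⟨?_, hxG⟩⟩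
    refine Subgroup.mem_compatibleSet_of_dense σ hσc hMo hG fun h h1 h2 hhG => ?_
    exact hx h ⟨hhG, h1⟩ ⟨G.mul_mem (G.mul_mem (G.inv_mem hxG) hhG) hxG, h2⟩
  subst hBL
  refine ⟨hclopen.isOpen, hclopen.isClosed, hinter, ?_⟩
  rw [← hinter, hclopen.closure_inter_dense hG]

/-- Let `L` be a topological group, `M` an open subgroup, `G` a dense
subgroup, `H = G ⊓ M`, and `σ : M → ℂ` a continuous unimodular character.  With
`B = {x ∈ G | σ(h) = σ(x⁻¹ h x) for all h ∈ H ∩ x H x⁻¹}` and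
`B_L = {x ∈ L | σ(h) = σ(x⁻¹ h x) for all h ∈ M ∩ x M x⁻¹}`, the set `B_L` is open and
closed, `B_L ∩ G = B`, and the closure of `B` equals `B_L`. -/
theorem stmt_8 {L : Type*} [Group L] [TopologicalSpace L] [IsTopologicalGroup L]
    (M G : Subgroup L) (hMo : IsOpen (M : Set L)) (hG : Dense (G : Set L))
    (σ : M →* ℂ) (hσc : Continuous σ) (hσu : ∀ m : M, ‖σ m‖ = 1)
    (B BL : Set L)
    (hB : B = {x : L | x ∈ G ∧ ∀ (h : L) (h1 : h ∈ G ⊓ M) (h2 : x⁻¹ * h * x ∈ G ⊓ M),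
      σ ⟨h, (Subgroup.mem_inf.mp h1).2⟩ = σ ⟨x⁻¹ * h * x, (Subgroup.mem_inf.mp h2).2⟩})
    (hBL : BL = {x : L | ∀ (h : L) (h1 : h ∈ M) (h2 : x⁻¹ * h * x ∈ M),
      σ ⟨h, h1⟩ = σ ⟨x⁻¹ * h * x, h2⟩}) :
    IsOpen BL ∧ IsClosed BL ∧ BL ∩ (G : Set L) = B ∧ closure B = BL :=
  stmt_8_general M G hMo hG σ hσc B BL hB hBL
end

section
/- Let G be a group, H a subgroup, σ : H → ℂ a group homomorphism with |σ(h)| = 1 for all h ∈ H, and let x ∈ B = {x ∈ G | σ(h) = σ(x⁻¹hx) for all h ∈ H ∩ xHx⁻¹}. Then there exists a unique function e : G → ℂ such that e(x) = 1, e(y) = 0 for every y ∉ HxH, and e(hyk) = σ(h) e(y) σ(k) for all h, k ∈ H and y ∈ G. Moreover this function satisfies e(hxk) = σ(h)σ(k) for all h, k ∈ H; in particular, if h₁xk₁ = h₂xk₂ with h₁, h₂, k₁, k₂ ∈ H, then σ(h₁)σ(k₁) = σ(h₂)σ(k₂). -/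
/-!
If `h₁ x k₁ = h₂ x k₂`, then `x⁻¹ (h₂⁻¹ h₁) x = k₂ k₁⁻¹` lies in `H ∩ x⁻¹ H x`, so Mackey's
condition on `x` gives `σ (h₂⁻¹ h₁) = σ (k₂ k₁⁻¹)`, i.e. `σ h₁ σ k₁ = σ h₂ σ k₂`. Hence
`h x k ↦ σ h σ k` is well defined on `H x H`; extended by `0` it is the required function, and
any function with the three properties is forced to take these values on `H x H`.
-/

namespace Subgroup

variable {G M : Type*} [Group G] {H : Subgroup G}

/-- Membership of `x` in the paper's set `B`. -/
def IsIntertwining [MulOneClass M] (σ : H →* M) (x : G) : Prop :=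
  ∀ (h : G) (h1 : h ∈ H) (h2 : x⁻¹ * h * x ∈ H), σ ⟨h, h1⟩ = σ ⟨x⁻¹ * h * x, h2⟩

section CommMonoid

variable [CommMonoid M]

theorem map_mul_map_eq_of_mul_mul_eq (σ : H →* M) {x : G} (hx : IsIntertwining σ x)
    {h₁ h₂ k₁ k₂ : H} (heq : (h₁ : G) * x * k₁ = h₂ * x * k₂) :
    σ h₁ * σ k₁ = σ h₂ * σ k₂ := by
  have hconj : x⁻¹ * ((h₂⁻¹ * h₁ : H) : G) * x = ((k₂ * k₁⁻¹ : H) : G) := by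
    have : ((k₂ * k₁⁻¹ : H) : G) = x⁻¹ * (h₂ : G)⁻¹ * (h₂ * x * k₂) * (k₁ : G)⁻¹ := by
      push_cast; group
    rw [this, ← heq]; push_cast; group
  have hσ : σ (h₂⁻¹ * h₁) = σ (k₂ * k₁⁻¹) := by
    rw [hx _ (h₂⁻¹ * h₁).2 (hconj ▸ (k₂ * k₁⁻¹).2)]
    exact congrArg σ (Subtype.ext hconj)
  calc σ h₁ * σ k₁ = σ h₂ * σ (h₂⁻¹ * h₁) * σ k₁ := by rw [← map_mul σ h₂, mul_inv_cancel_left]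
    _ = σ h₂ * σ (k₂ * k₁⁻¹ * k₁) := by rw [hσ, mul_assoc, ← map_mul]
    _ = σ h₂ * σ k₂ := by rw [inv_mul_cancel_right]

theorem apply_mul_mul_eq_map_mul_map (σ : H →* M) {x : G} {e : G → M} (hex : e x = 1)
    (he : ∀ (h k : H) (y : G), e ((h : G) * y * k) = σ h * e y * σ k) (h k : H) :
    e ((h : G) * x * k) = σ h * σ k := by
  rw [he, hex, mul_one]

end CommMonoid

theorem exists_mul_mul_eq_iff (x y : G) (h k : H) :
    (∃ a b : H, (h : G) * y * k = a * x * b) ↔ ∃ a b : H, y = a * x * b := by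
  constructor
  · rintro ⟨a, b, hab⟩
    refine ⟨h⁻¹ * a, b * k⁻¹, ?_⟩
    have : y = (h : G)⁻¹ * (h * y * k) * (k : G)⁻¹ := by group
    rw [this, hab]; push_cast; group
  · rintro ⟨a, b, rfl⟩
    exact ⟨h * a, b * k, by push_cast; group⟩

section CommMonoidWithZero

variable [CommMonoidWithZero M]

open Classical in
/-- The paper's `ε_x`. -/
noncomputable def doubleCosetFun (σ : H →* M) (x : G) : G → M := fun y =>
  if hy : ∃ h k : H, y = (h : G) * x * k then σ hy.choose * σ hy.choose_spec.choose else 0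

variable (σ : H →* M) {x : G}

theorem doubleCosetFun_mul_mul (hx : IsIntertwining σ x) (h k : H) :
    doubleCosetFun σ x ((h : G) * x * k) = σ h * σ k := by
  have hy : ∃ a b : H, (h : G) * x * k = a * x * b := ⟨h, k, rfl⟩
  rw [doubleCosetFun, dif_pos hy]
  exact map_mul_map_eq_of_mul_mul_eq σ hx hy.choose_spec.choose_spec.symm

theorem doubleCosetFun_of_not_exists {y : G} (hy : ¬ ∃ h k : H, y = (h : G) * x * k) :
    doubleCosetFun σ x y = 0 :=
  dif_neg hy

theorem doubleCosetFun_map_mul_mul (hx : IsIntertwining σ x) (h k : H) (y : G) :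
    doubleCosetFun σ x ((h : G) * y * k) = σ h * doubleCosetFun σ x y * σ k := by
  by_cases hy : ∃ a b : H, y = (a : G) * x * b
  · obtain ⟨a, b, rfl⟩ := hy
    have hprod : (h : G) * (a * x * b) * k = ((h * a : H) : G) * x * (b * k : H) := by
      push_cast; group
    rw [hprod, doubleCosetFun_mul_mul σ hx, doubleCosetFun_mul_mul σ hx, map_mul, map_mul]
    ac_rfl
  · have hhyk := (exists_mul_mul_eq_iff x y h k).not.mpr hy
    rw [doubleCosetFun_of_not_exists σ hy, doubleCosetFun_of_not_exists σ hhyk, mul_zero,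
      zero_mul]

theorem eq_doubleCosetFun (hx : IsIntertwining σ x) {e : G → M} (hex : e x = 1)
    (hzero : ∀ y : G, (¬ ∃ h k : H, y = (h : G) * x * k) → e y = 0)
    (he : ∀ (h k : H) (y : G), e ((h : G) * y * k) = σ h * e y * σ k) :
    e = doubleCosetFun σ x := by
  funext y
  by_cases hy : ∃ h k : H, y = (h : G) * x * k
  · obtain ⟨h, k, rfl⟩ := hy
    rw [apply_mul_mul_eq_map_mul_map σ hex he, doubleCosetFun_mul_mul σ hx]
  · rw [hzero y hy, doubleCosetFun_of_not_exists σ hy]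

end CommMonoidWithZero

end Subgroup

open Subgroup in
theorem stmt_10_general {G : Type*} [Group G] (H : Subgroup G) (σ : H →* ℂ)
    (x : G)
    (hx : ∀ (h : G) (h1 : h ∈ H) (h2 : x⁻¹ * h * x ∈ H),
      σ ⟨h, h1⟩ = σ ⟨x⁻¹ * h * x, h2⟩) :
    (∃! e : G → ℂ, e x = 1 ∧ (∀ y : G, (¬ ∃ h k : H, y = (h : G) * x * (k : G)) → e y = 0) ∧
      (∀ (h k : H) (y : G), e ((h : G) * y * (k : G)) = σ h * e y * σ k)) ∧
    (∀ e : G → ℂ, (e x = 1 ∧ (∀ y : G, (¬ ∃ h k : H, y = (h : G) * x * (k : G)) → e y = 0) ∧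
        (∀ (h k : H) (y : G), e ((h : G) * y * (k : G)) = σ h * e y * σ k)) →
      ∀ h k : H, e ((h : G) * x * (k : G)) = σ h * σ k) ∧
    (∀ h₁ h₂ k₁ k₂ : H, (h₁ : G) * x * (k₁ : G) = (h₂ : G) * x * (k₂ : G) →
      σ h₁ * σ k₁ = σ h₂ * σ k₂) := by
  have hself : doubleCosetFun σ x x = 1 := by
    simpa using doubleCosetFun_mul_mul σ hx 1 1
  refine ⟨⟨doubleCosetFun σ x,
      ⟨hself, fun _ => doubleCosetFun_of_not_exists σ, doubleCosetFun_map_mul_mul σ hx⟩,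
      fun e ⟨hex, hzero, he⟩ => eq_doubleCosetFun σ hx hex hzero he⟩,
    fun e ⟨hex, _, he⟩ => apply_mul_mul_eq_map_mul_map σ hex he,
    fun _ _ _ _ => map_mul_map_eq_of_mul_mul_eq σ hx⟩

/-- Let `G` be a group, `H` a subgroup, `σ : H → ℂ` a unimodular character,
and `x ∈ B` (Mackey's intertwining condition).  Then there is a unique function `e : G → ℂ`
with `e x = 1`, vanishing off the double coset `H x H`, and satisfying
`e (h y k) = σ h · e y · σ k`.  Moreover any such function satisfies `e (h x k) = σ h · σ k`;
in particular `h₁ x k₁ = h₂ x k₂` forces `σ h₁ σ k₁ = σ h₂ σ k₂`. -/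
theorem stmt_10 {G : Type*} [Group G] (H : Subgroup G) (σ : H →* ℂ)
    (hσu : ∀ h : H, ‖σ h‖ = 1)
    (x : G)
    (hx : ∀ (h : G) (h1 : h ∈ H) (h2 : x⁻¹ * h * x ∈ H),
      σ ⟨h, h1⟩ = σ ⟨x⁻¹ * h * x, h2⟩) :
    (∃! e : G → ℂ, e x = 1 ∧ (∀ y : G, (¬ ∃ h k : H, y = (h : G) * x * (k : G)) → e y = 0) ∧
      (∀ (h k : H) (y : G), e ((h : G) * y * (k : G)) = σ h * e y * σ k)) ∧
    (∀ e : G → ℂ, (e x = 1 ∧ (∀ y : G, (¬ ∃ h k : H, y = (h : G) * x * (k : G)) → e y = 0) ∧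
        (∀ (h k : H) (y : G), e ((h : G) * y * (k : G)) = σ h * e y * σ k)) →
      ∀ h k : H, e ((h : G) * x * (k : G)) = σ h * σ k) ∧
    (∀ h₁ h₂ k₁ k₂ : H, (h₁ : G) * x * (k₁ : G) = (h₂ : G) * x * (k₂ : G) →
      σ h₁ * σ k₁ = σ h₂ * σ k₂) :=
  stmt_10_general H σ x hx
end

section
/- Let L be a locally compact Hausdorff topological group with left Haar measure μ, M a compact open subgroup with μ(M) = 1, σ : M → ℂ a continuous group homomorphism with |σ(m)| = 1 for all m ∈ M, and p : L → ℂ given by p(y) = σ(y) for y ∈ M, p(y) = 0 otherwise. Fix x ∈ L, let L(x) = [M : M ∩ xMx⁻¹] (a finite index), and define I : L → ℂ by I(z) = ∫_L p(u) · p(x⁻¹u⁻¹z) dμ(u). Then μ(M ∩ xMx⁻¹) = 1/L(x), I(z) = 0 for all z ∉ MxM, and: (i) if σ(h) = σ(x⁻¹hx) for all h ∈ M ∩ xMx⁻¹, then I(hxk) = σ(h)σ(k)/L(x) for all h, k ∈ M, and ∫_L |I| dμ = 1; (ii) if σ(h) ≠ σ(x⁻¹hx) for some h ∈ M ∩ xMx⁻¹,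 then I is identically zero. -/
/-!
The integrand `p u * p (x⁻¹ * u⁻¹ * z)` vanishes unless `u ∈ M` and `x⁻¹ * u⁻¹ * z ∈ M`, so `I` is
supported on the double coset `M x M`; left invariance of `μ` and multiplicativity of `p` on `M`
give `I (h * x * k) = σ h * σ k * I x`. If `σ` agrees with `σ ∘ conj x⁻¹` on `N = M ∩ x M x⁻¹`,
the integrand of `I x` is the indicator of `N`, so `I x = μ N`. Otherwise pick `h ∈ N` where they
differ: since `h * x * (x⁻¹ * h⁻¹ * x) = x`, we get `I x = c * I x` with `c ≠ 1`, so `I x = 0`.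
The measures come from counting cosets: `M` is the disjoint union of `[M : N]` left translates of
`N`, and `M x M` that of `[M : N]` left translates of `x M`; the index is finite because `N` is
open in the compact group `M`.
-/

open MeasureTheory DoubleCoset
open scoped ENNReal Pointwise

lemma Subgroup.mem_map_conj {G : Type*} [Group G] {K : Subgroup G} {g y : G} :
    y ∈ K.map (MulAut.conj g).toMonoidHom ↔ g⁻¹ * y * g ∈ K := by
  rw [Subgroup.mem_map_equiv, MulAut.conj_symm_apply]

lemma Subgroup.coe_map_conj {G : Type*} [Group G] (K : Subgroup G) (g : G) :
    (K.map (MulAut.conj g).toMonoidHom : Set G) = (fun y => g⁻¹ * y * g) ⁻¹' K :=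
  Set.ext fun _ => Subgroup.mem_map_conj

section DoubleCosetMeasure

variable {G : Type*} [Group G]

lemma smul_coe_eq_iff_mem_map_conj (K : Subgroup G) (g a b : G) :
    (a * g) • (K : Set G) = (b * g) • (K : Set G) ↔
      a⁻¹ * b ∈ K.map (MulAut.conj g).toMonoidHom := by
  rw [leftCoset_eq_iff, Subgroup.mem_map_conj]
  group

lemma leftCoset_eq_of_not_disjoint (K : Subgroup G) {a b : G}
    (h : ¬Disjoint (a • (K : Set G)) (b • (K : Set G))) : a • (K : Set G) = b • (K : Set G) := by
  obtain ⟨z, hza, hzb⟩ := Set.not_disjoint_iff.mp h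
  rw [mem_leftCoset_iff] at hza hzb
  rw [leftCoset_eq_iff]
  simpa [mul_assoc] using K.mul_mem hza (K.inv_mem hzb)

variable [MeasurableSpace G] [MeasurableMul G] (μ : Measure G) [μ.IsMulLeftInvariant]

theorem measure_doubleCoset (H K : Subgroup G) (hK : MeasurableSet (K : Set G)) (g : G)
    [((K.map (MulAut.conj g).toMonoidHom).subgroupOf H).FiniteIndex] :
    μ (doubleCoset g H K) = (K.map (MulAut.conj g).toMonoidHom).relIndex H * μ K := by
  set H' := (K.map (MulAut.conj g).toMonoidHom).subgroupOf H
  let F : H ⧸ H' → Set G := Quotient.lift (fun h : H => ((h : G) * g) • (K : Set G))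
    fun a b hab => (smul_coe_eq_iff_mem_map_conj K g a b).mpr
      (Subgroup.mem_subgroupOf.mp (QuotientGroup.leftRel_apply.mp hab))
  have hF_eq_iff (a b : H) : F a = F b ↔ (a : H ⧸ H') = b := by
    rw [QuotientGroup.eq]
    exact smul_coe_eq_iff_mem_map_conj K g a b
  have hunion : doubleCoset g H K = ⋃ q, F q := by
    rw [← doubleCoset_union_leftCoset, ← QuotientGroup.mk_surjective.iUnion_comp]
    rfl
  have hdisj : Pairwise (Function.onFun Disjoint F) := by
    intro q q' hne
    induction q using QuotientGroup.induction_on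
    induction q' using QuotientGroup.induction_on
    by_contra h
    exact hne ((hF_eq_iff _ _).mp (leftCoset_eq_of_not_disjoint K h))
  have hmeas (q : H ⧸ H') : MeasurableSet (F q) := by
    induction q using QuotientGroup.induction_on
    exact hK.const_smul _
  have hμF (q : H ⧸ H') : μ (F q) = μ K := by
    induction q using QuotientGroup.induction_on
    exact measure_smul μ _ _
  rw [hunion, measure_iUnion hdisj hmeas]
  simp only [hμF, ENNReal.tsum_const, ENat.card_eq_coe_natCard, Subgroup.relIndex, Subgroup.index]
  rfl

theorem Subgroup.relIndex_mul_measure {H K : Subgroup G} (hKH : K ≤ H)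
    (hK : MeasurableSet (K : Set G)) [(K.subgroupOf H).FiniteIndex] : K.relIndex H * μ K = μ H := by
  have hconj : K.map (MulAut.conj (1 : G)).toMonoidHom = K := by
    ext y
    rw [Subgroup.mem_map_conj]
    simp
  have : ((K.map (MulAut.conj (1 : G)).toMonoidHom).subgroupOf H).FiniteIndex := by
    rw [hconj]; infer_instance
  have hH : doubleCoset 1 (H : Set G) K = H := by
    ext z
    rw [mem_doubleCoset]
    refine ⟨?_, fun hz => ⟨z, hz, 1, K.one_mem, by simp⟩⟩
    rintro ⟨h, hh, k, hk, rfl⟩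
    simpa using H.mul_mem hh (hKH hk)
  rw [← hH, measure_doubleCoset μ H K hK, hconj]

end DoubleCosetMeasure

lemma Subgroup.finiteIndex_subgroupOf_of_isCompact_of_isOpen {G : Type*} [Group G]
    [TopologicalSpace G] [IsTopologicalGroup G] {H K : Subgroup G} (hH : IsCompact (H : Set G))
    (hK : IsOpen (K : Set G)) : (K.subgroupOf H).FiniteIndex := by
  have : CompactSpace H := isCompact_iff_compactSpace.mp hH
  have := Subgroup.quotient_finite_of_isOpen (K.subgroupOf H) (hK.preimage continuous_subtype_val)
  exact Subgroup.finiteIndex_of_finite_quotient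

namespace MonoidHom

variable {G R : Type*} [Group G] [MonoidWithZero R] {H : Subgroup G} (σ : H →* R)

open Classical in
noncomputable def extendByZero (y : G) : R := if h : y ∈ H then σ ⟨y, h⟩ else 0

variable {σ}

lemma extendByZero_of_mem {y : G} (hy : y ∈ H) : σ.extendByZero y = σ ⟨y, hy⟩ := dif_pos hy

lemma extendByZero_of_notMem {y : G} (hy : y ∉ H) : σ.extendByZero y = 0 := dif_neg hy

lemma extendByZero_mul_of_mem_left {g : G} (hg : g ∈ H) (y : G) :
    σ.extendByZero (g * y) = σ.extendByZero g * σ.extendByZero y := by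
  by_cases hy : y ∈ H
  · rw [extendByZero_of_mem hg, extendByZero_of_mem hy, extendByZero_of_mem (H.mul_mem hg hy),
      ← map_mul]
    rfl
  · rw [extendByZero_of_notMem hy, extendByZero_of_notMem ((H.mul_mem_cancel_left hg).not.mpr hy),
      mul_zero]

lemma extendByZero_mul_of_mem_right {y : G} (hy : y ∈ H) (g : G) :
    σ.extendByZero (g * y) = σ.extendByZero g * σ.extendByZero y := by
  by_cases hg : g ∈ H
  · exact extendByZero_mul_of_mem_left hg y
  · rw [extendByZero_of_notMem hg, extendByZero_of_notMem ((H.mul_mem_cancel_right hy).not.mpr hg),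
      zero_mul]

lemma extendByZero_mul_inv {g : G} (hg : g ∈ H) : σ.extendByZero g * σ.extendByZero g⁻¹ = 1 := by
  rw [← extendByZero_mul_of_mem_left hg, mul_inv_cancel, extendByZero_of_mem H.one_mem]
  exact σ.map_one

end MonoidHom

section ConvDiracConv

variable {L : Type*} [Group L] [MeasurableSpace L] (μ : Measure L) {M : Subgroup L}
  (σ : M →* ℂ) (x : L)

/-- The function `p ⋆ δ_x ⋆ p` for `p = σ.extendByZero`. -/
noncomputable def MonoidHom.convDiracConv (z : L) : ℂ :=
  ∫ u, σ.extendByZero u * σ.extendByZero (x⁻¹ * u⁻¹ * z) ∂μ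

variable {μ σ x}

open MonoidHom

lemma convDiracConv_eq_zero_of_notMem {z : L} (hz : z ∉ doubleCoset x (M : Set L) M) :
    σ.convDiracConv μ x z = 0 := by
  have hzero (u : L) : σ.extendByZero u * σ.extendByZero (x⁻¹ * u⁻¹ * z) = 0 := by
    by_cases hu : u ∈ M
    · have hv : x⁻¹ * u⁻¹ * z ∉ M := fun hv => hz (mem_doubleCoset.mpr ⟨u, hu, _, hv, by group⟩)
      rw [extendByZero_of_notMem hv, mul_zero]
    · rw [extendByZero_of_notMem hu, zero_mul]
  simp only [convDiracConv, hzero, integral_zero]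

variable [MeasurableMul L]

lemma convDiracConv_self_of_forall_eq
    (hσ : ∀ (h : L) (h1 : h ∈ M) (h2 : x⁻¹ * h * x ∈ M), σ ⟨h, h1⟩ = σ ⟨x⁻¹ * h * x, h2⟩)
    (hM : MeasurableSet (M : Set L)) :
    σ.convDiracConv μ x x = μ.real (M ⊓ M.map (MulAut.conj x).toMonoidHom : Subgroup L) := by
  set N := M ⊓ M.map (MulAut.conj x).toMonoidHom
  have hmemN (u : L) : u ∈ N ↔ u ∈ M ∧ x⁻¹ * u⁻¹ * x ∈ M := by
    rw [Subgroup.mem_inf, Subgroup.mem_map_conj, ← M.inv_mem_iff (x := x⁻¹ * u * x)]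
    group
  have hN : MeasurableSet (N : Set L) := by
    rw [Subgroup.coe_inf, Subgroup.coe_map_conj]
    exact hM.inter (hM.preimage ((measurable_const_mul x⁻¹).mul_const x))
  have hindicator : (fun u => σ.extendByZero u * σ.extendByZero (x⁻¹ * u⁻¹ * x)) =
      (N : Set L).indicator fun _ => 1 := by
    funext u
    by_cases hu : u ∈ N
    · obtain ⟨hu1, hu2⟩ := (hmemN u).mp hu
      rw [Set.indicator_of_mem hu, extendByZero_of_mem hu2, ← hσ _ (M.inv_mem hu1) hu2,
        ← extendByZero_of_mem, extendByZero_mul_inv hu1]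
    · rw [Set.indicator_of_notMem hu]
      rcases not_and_or.mp (mt (hmemN u).mpr hu) with hu1 | hu2
      · rw [extendByZero_of_notMem hu1, zero_mul]
      · rw [extendByZero_of_notMem hu2, mul_zero]
  rw [convDiracConv, hindicator, integral_indicator_const _ hN, Complex.real_smul, mul_one]

variable [μ.IsMulLeftInvariant]

lemma convDiracConv_mul_mul {h k : L} (hh : h ∈ M) (hk : k ∈ M) :
    σ.convDiracConv μ x (h * x * k) =
      σ.extendByZero h * σ.extendByZero k * σ.convDiracConv μ x x := by
  have hshift (u : L) : x⁻¹ * (h * u)⁻¹ * (h * x * k) = x⁻¹ * u⁻¹ * x * k := by group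
  calc σ.convDiracConv μ x (h * x * k)
      = ∫ u, σ.extendByZero (h * u) * σ.extendByZero (x⁻¹ * (h * u)⁻¹ * (h * x * k)) ∂μ :=
        (integral_mul_left_eq_self _ h).symm
    _ = ∫ u, σ.extendByZero h * σ.extendByZero k *
          (σ.extendByZero u * σ.extendByZero (x⁻¹ * u⁻¹ * x)) ∂μ := by
        congr 1 with u
        rw [hshift, extendByZero_mul_of_mem_left hh, extendByZero_mul_of_mem_right hk]
        ring
    _ = _ := integral_const_mul _ _

lemma convDiracConv_eq_zero_of_exists_ne
    (hσ : ∃ (h : L) (h1 : h ∈ M) (h2 : x⁻¹ * h * x ∈ M), σ ⟨h, h1⟩ ≠ σ ⟨x⁻¹ * h * x, h2⟩)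
    (z : L) : σ.convDiracConv μ x z = 0 := by
  obtain ⟨h, h1, h2, hne⟩ := hσ
  have h3 : x⁻¹ * h⁻¹ * x ∈ M := by simpa [mul_assoc] using M.inv_mem h2
  set c := σ.extendByZero h * σ.extendByZero (x⁻¹ * h⁻¹ * x)
  have hc : c ≠ 1 := by
    intro hc
    have hinv := extendByZero_mul_inv (σ := σ) h2
    rw [show (x⁻¹ * h * x)⁻¹ = x⁻¹ * h⁻¹ * x by group] at hinv
    apply hne
    rw [← extendByZero_of_mem, ← extendByZero_of_mem]
    linear_combination (σ.extendByZero (x⁻¹ * h * x)) * hc - σ.extendByZero h * hinv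
  have hfix := convDiracConv_mul_mul (μ := μ) (σ := σ) (x := x) h1 h3
  rw [show h * x * (x⁻¹ * h⁻¹ * x) = x by group] at hfix
  have hzero : σ.convDiracConv μ x x = 0 := eq_zero_of_mul_eq_self_left hc hfix.symm
  by_cases hz : z ∈ doubleCoset x (M : Set L) M
  · obtain ⟨h, hh, k, hk, rfl⟩ := mem_doubleCoset.mp hz
    rw [convDiracConv_mul_mul hh hk, hzero, mul_zero]
  · exact convDiracConv_eq_zero_of_notMem hz

lemma norm_convDiracConv_of_forall_eq
    (hσ : ∀ (h : L) (h1 : h ∈ M) (h2 : x⁻¹ * h * x ∈ M), σ ⟨h, h1⟩ = σ ⟨x⁻¹ * h * x, h2⟩)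
    (hσu : ∀ m : M, ‖σ m‖ = 1) (hM : MeasurableSet (M : Set L)) (z : L) :
    ‖σ.convDiracConv μ x z‖ = (doubleCoset x (M : Set L) M).indicator
      (fun _ => μ.real (M ⊓ M.map (MulAut.conj x).toMonoidHom : Subgroup L)) z := by
  by_cases hz : z ∈ doubleCoset x (M : Set L) M
  · obtain ⟨h, hh, k, hk, rfl⟩ := mem_doubleCoset.mp hz
    rw [Set.indicator_of_mem hz, convDiracConv_mul_mul hh hk,
      convDiracConv_self_of_forall_eq hσ hM, norm_mul, norm_mul, extendByZero_of_mem hh,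
      extendByZero_of_mem hk, hσu, hσu, Complex.norm_real, Real.norm_of_nonneg measureReal_nonneg,
      one_mul, one_mul]
  · rw [Set.indicator_of_notMem hz, convDiracConv_eq_zero_of_notMem hz, norm_zero]

end ConvDiracConv

open MonoidHom

theorem stmt_12_general {L : Type*} [Group L] [TopologicalSpace L] [IsTopologicalGroup L]
    [MeasurableSpace L] [BorelSpace L]
    (μ : Measure L) [μ.IsHaarMeasure]
    (M : Subgroup L) (hMc : IsCompact (M : Set L)) (hMo : IsOpen (M : Set L))
    (hμM : μ (M : Set L) = 1)
    (σ : M →* ℂ) (hσu : ∀ m : M, ‖σ m‖ = 1)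
    (p : L → ℂ)
    (hp : ∀ y : L, (∀ h : y ∈ M, p y = σ ⟨y, h⟩) ∧ (y ∉ M → p y = 0))
    (x : L) (Lx : ℕ)
    (hLx : Lx = ((M ⊓ Subgroup.map (MulAut.conj x).toMonoidHom M).subgroupOf M).index)
    (I : L → ℂ) (hI : ∀ z : L, I z = ∫ u, p u * p (x⁻¹ * u⁻¹ * z) ∂μ) :
    μ ((M : Set L) ∩ {y : L | x⁻¹ * y * x ∈ M}) = (Lx : ℝ≥0∞)⁻¹ ∧
    (∀ z : L, (¬ ∃ m ∈ M, ∃ n ∈ M, z = m * x * n) → I z = 0) ∧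
    ((∀ (h : L) (h1 : h ∈ M) (h2 : x⁻¹ * h * x ∈ M), σ ⟨h, h1⟩ = σ ⟨x⁻¹ * h * x, h2⟩) →
      (∀ h k : M, I ((h : L) * x * (k : L)) = σ h * σ k / (Lx : ℂ)) ∧
      ∫ z, ‖I z‖ ∂μ = 1) ∧
    ((∃ (h : L) (h1 : h ∈ M) (h2 : x⁻¹ * h * x ∈ M), σ ⟨h, h1⟩ ≠ σ ⟨x⁻¹ * h * x, h2⟩) →
      ∀ z : L, I z = 0) := by
  obtain rfl : p = σ.extendByZero := funext fun y => by
    by_cases hy : y ∈ M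
    · rw [(hp y).1 hy, extendByZero_of_mem hy]
    · rw [(hp y).2 hy, extendByZero_of_notMem hy]
  obtain rfl : I = σ.convDiracConv μ x := funext hI
  set N := M ⊓ M.map (MulAut.conj x).toMonoidHom
  have hNset : (N : Set L) = (M : Set L) ∩ {y | x⁻¹ * y * x ∈ M} := by
    rw [Subgroup.coe_inf, Subgroup.coe_map_conj]
    rfl
  have hNo : IsOpen (N : Set L) := by
    rw [hNset]
    exact hMo.inter (hMo.preimage (by fun_prop))
  have := Subgroup.finiteIndex_subgroupOf_of_isCompact_of_isOpen hMc hNo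
  have hLx0 : (Lx : ℝ≥0∞) ≠ 0 := by
    simpa [hLx] using Subgroup.FiniteIndex.index_ne_zero
  have hμN : μ N = (Lx : ℝ≥0∞)⁻¹ := by
    have := Subgroup.relIndex_mul_measure μ inf_le_left hNo.measurableSet
    rw [hμM, Subgroup.relIndex, ← hLx, mul_comm] at this
    exact ENNReal.eq_inv_of_mul_eq_one_left this
  have hMxMo : IsOpen (doubleCoset x (M : Set L) M) := hMo.mul_left
  have hμMxM : μ (doubleCoset x (M : Set L) M) = Lx := by
    have : ((M.map (MulAut.conj x).toMonoidHom).subgroupOf M).FiniteIndex := by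
      rwa [← Subgroup.inf_subgroupOf_left]
    rw [hLx, Subgroup.inf_subgroupOf_left, measure_doubleCoset μ M M hMo.measurableSet, hμM,
      mul_one, Subgroup.relIndex]
  refine ⟨hNset ▸ hμN, fun z hz => convDiracConv_eq_zero_of_notMem (mt mem_doubleCoset.mp hz),
    fun hσ => ⟨fun h k => ?_, ?_⟩, convDiracConv_eq_zero_of_exists_ne⟩
  · rw [convDiracConv_mul_mul h.2 k.2, convDiracConv_self_of_forall_eq hσ hMo.measurableSet,
      measureReal_def, hμN, extendByZero_of_mem h.2, extendByZero_of_mem k.2, ENNReal.toReal_inv]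
    simp [div_eq_mul_inv]
  · simp_rw [norm_convDiracConv_of_forall_eq hσ hσu hMo.measurableSet]
    rw [integral_indicator_const _ hMxMo.measurableSet, measureReal_def, measureReal_def, hμMxM,
      hμN, ENNReal.toReal_inv, smul_eq_mul, ENNReal.toReal_natCast]
    exact mul_inv_cancel₀ (by exact_mod_cast hLx0)

/-- Let `L` be a locally compact Hausdorff group with left Haar measure `μ`,
`M` compact open with `μ M = 1`, `σ : M → ℂ` a continuous unimodular character, and
`p = χ_M σ`.  For `x ∈ L` let `L(x) = [M : M ∩ x M x⁻¹]` and
`I z = ∫ p(u) p(x⁻¹ u⁻¹ z) dμ(u)` (this is `p ⋆ δ_x ⋆ p`).  Then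
`μ (M ∩ x M x⁻¹) = 1/L(x)`, `I` vanishes off `M x M`, and: (i) if
`σ h = σ (x⁻¹ h x)` for all `h ∈ M ∩ x M x⁻¹` then `I (h x k) = σ h σ k / L(x)` for
`h, k ∈ M` and `∫ |I| dμ = 1`; (ii) otherwise `I ≡ 0`. -/
theorem stmt_12 {L : Type*} [Group L] [TopologicalSpace L] [IsTopologicalGroup L]
    [LocallyCompactSpace L] [T2Space L] [MeasurableSpace L] [BorelSpace L]
    (μ : Measure L) [μ.IsHaarMeasure]
    (M : Subgroup L) (hMc : IsCompact (M : Set L)) (hMo : IsOpen (M : Set L))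
    (hμM : μ (M : Set L) = 1)
    (σ : M →* ℂ) (hσc : Continuous σ) (hσu : ∀ m : M, ‖σ m‖ = 1)
    (p : L → ℂ)
    (hp : ∀ y : L, (∀ h : y ∈ M, p y = σ ⟨y, h⟩) ∧ (y ∉ M → p y = 0))
    (x : L) (Lx : ℕ)
    (hLx : Lx = ((M ⊓ Subgroup.map (MulAut.conj x).toMonoidHom M).subgroupOf M).index)
    (I : L → ℂ) (hI : ∀ z : L, I z = ∫ u, p u * p (x⁻¹ * u⁻¹ * z) ∂μ) :
    μ ((M : Set L) ∩ {y : L | x⁻¹ * y * x ∈ M}) = (Lx : ℝ≥0∞)⁻¹ ∧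
    (∀ z : L, (¬ ∃ m ∈ M, ∃ n ∈ M, z = m * x * n) → I z = 0) ∧
    ((∀ (h : L) (h1 : h ∈ M) (h2 : x⁻¹ * h * x ∈ M), σ ⟨h, h1⟩ = σ ⟨x⁻¹ * h * x, h2⟩) →
      (∀ h k : M, I ((h : L) * x * (k : L)) = σ h * σ k / (Lx : ℂ)) ∧
      ∫ z, ‖I z‖ ∂μ = 1) ∧
    ((∃ (h : L) (h1 : h ∈ M) (h2 : x⁻¹ * h * x ∈ M), σ ⟨h, h1⟩ ≠ σ ⟨x⁻¹ * h * x, h2⟩) →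
      ∀ z : L, I z = 0) :=
  stmt_12_general μ M hMc hMo hμM σ hσu p hp x Lx hLx I hI
end

section
/- Let L be a locally compact Hausdorff topological group with a nonzero left Haar measure μ, M a compact open subgroup of L, and x ∈ L. Then the indices [M : M ∩ xMx⁻¹] and [M : M ∩ x⁻¹Mx] are finite and μ(xMx⁻¹) · [M : M ∩ xMx⁻¹] = μ(M) · [M : M ∩ x⁻¹Mx]. Equivalently, the modular function Δ of L satisfies Δ(x) = [M : M ∩ xMx⁻¹] / [M : M ∩ x⁻¹Mx] for all x ∈ L. -/
/-!
`M` and `N = x M x⁻¹` are both compact open, so `M ⊓ N` has finite index in each of them, and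
cutting each into left cosets of `M ⊓ N` gives `μ M = [M : M ⊓ N] μ (M ⊓ N)` and
`μ N = [N : M ⊓ N] μ (M ⊓ N)`. Conjugation by `x⁻¹` carries the pair `M ⊓ N ≤ N` to
`x⁻¹ M x ⊓ M ≤ M`, so `[N : M ⊓ N] = [M : M ⊓ x⁻¹ M x]`.
-/

open MeasureTheory
open scoped ENNReal Pointwise

namespace Subgroup

variable {G : Type*} [Group G]

instance instMeasurableMul [MeasurableSpace G] [MeasurableMul G] (K : Subgroup G) :
    MeasurableMul K where
  measurable_const_mul c := ((measurable_const_mul (c : G)).comp measurable_subtype_coe).subtype_mk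
  measurable_mul_const c := ((measurable_mul_const (c : G)).comp measurable_subtype_coe).subtype_mk

theorem relIndex_mul_measure_s13 [MeasurableSpace G] [MeasurableMul G] {H K : Subgroup G}
    (hHK : H ≤ K) (hH : H.relIndex K ≠ 0) (hHm : MeasurableSet (H : Set G))
    (hKm : MeasurableSet (K : Set G)) (μ : Measure G) [μ.IsMulLeftInvariant] :
    H.relIndex K * μ H = μ K := by
  have hK : MeasurableEmbedding K.subtype := .subtype_coe hKm
  have : (μ.comap K.subtype).IsMulLeftInvariant := .comap μ hK
  have : (H.subgroupOf K).FiniteIndex := ⟨hH⟩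
  have := (H.subgroupOf K).index_mul_measure (measurable_subtype_coe hHm) (μ.comap K.subtype)
  rwa [hK.comap_apply, hK.comap_apply, Set.image_univ, coe_subtype, Subtype.range_coe,
    coe_subgroupOf, coe_subtype, Set.image_preimage_eq_of_subset (by simpa using hHK)] at this

theorem relIndex_ne_zero_of_isCompact_of_isOpen [TopologicalSpace G] [IsTopologicalGroup G]
    {H K : Subgroup G} (hK : IsCompact (K : Set G)) (hH : IsOpen (H : Set G)) :
    H.relIndex K ≠ 0 := by
  have : CompactSpace K := isCompact_iff_compactSpace.mp hK
  have := (H.subgroupOf K).quotient_finite_of_isOpen (subgroupOf_isOpen K H hH)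
  exact index_ne_zero_of_finite

theorem mem_map_conj_s13 {x y : G} {M : Subgroup G} :
    y ∈ map (MulAut.conj x).toMonoidHom M ↔ x⁻¹ * y * x ∈ M :=
  mem_map_equiv

theorem comap_conj_eq_map_conj_inv (x : G) (M : Subgroup G) :
    comap (MulAut.conj x).toMonoidHom M = map (MulAut.conj x⁻¹).toMonoidHom M := by
  ext y
  rw [mem_comap, mem_map_conj_s13, inv_inv]
  rfl

theorem relIndex_inf_map_conj_inv (x : G) (M : Subgroup G) :
    (M ⊓ map (MulAut.conj x⁻¹).toMonoidHom M).relIndex M =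
      (M ⊓ map (MulAut.conj x).toMonoidHom M).relIndex (map (MulAut.conj x).toMonoidHom M) := by
  rw [← relIndex_comap, comap_inf, comap_conj_eq_map_conj_inv,
    comap_map_eq_self_of_injective (MulAut.conj x).injective, inf_comm]

theorem measure_mul_relIndex_inf_eq [MeasurableSpace G] [MeasurableMul G] (μ : Measure G)
    [μ.IsMulLeftInvariant] {A B : Subgroup G} (hA : MeasurableSet (A : Set G))
    (hB : MeasurableSet (B : Set G)) (hAB : (A ⊓ B).relIndex A ≠ 0)
    (hBA : (A ⊓ B).relIndex B ≠ 0) :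
    μ B * (A ⊓ B).relIndex A = μ A * (A ⊓ B).relIndex B := by
  have hm : MeasurableSet ((A ⊓ B : Subgroup G) : Set G) := hA.inter hB
  rw [← relIndex_mul_measure_s13 inf_le_left hAB hm hA, ← relIndex_mul_measure_s13 inf_le_right hBA hm hB]
  ring

end Subgroup

open Subgroup in
theorem stmt_13_general {L : Type*} [Group L] [TopologicalSpace L] [IsTopologicalGroup L]
    [MeasurableSpace L] [BorelSpace L]
    (μ : Measure L) [μ.IsHaarMeasure]
    (M : Subgroup L) (hMc : IsCompact (M : Set L)) (hMo : IsOpen (M : Set L))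
    (x : L) :
    ((M ⊓ Subgroup.map (MulAut.conj x).toMonoidHom M).subgroupOf M).index ≠ 0 ∧
    ((M ⊓ Subgroup.map (MulAut.conj x⁻¹).toMonoidHom M).subgroupOf M).index ≠ 0 ∧
    μ {y : L | x⁻¹ * y * x ∈ M} *
        (((M ⊓ Subgroup.map (MulAut.conj x).toMonoidHom M).subgroupOf M).index : ℝ≥0∞) =
      μ (M : Set L) *
        (((M ⊓ Subgroup.map (MulAut.conj x⁻¹).toMonoidHom M).subgroupOf M).index : ℝ≥0∞) := by
  set N := map (MulAut.conj x).toMonoidHom M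
  have hN : (N : Set L) = {y : L | x⁻¹ * y * x ∈ M} := Set.ext fun _ ↦ mem_map_conj_s13
  have hNo : IsOpen (N : Set L) := hN ▸ hMo.preimage (by fun_prop)
  have hNc : IsCompact (N : Set L) := hMc.image (f := fun y ↦ x * y * x⁻¹) (by fun_prop)
  have hMN : (M ⊓ N).relIndex M ≠ 0 := relIndex_ne_zero_of_isCompact_of_isOpen hMc (hMo.inter hNo)
  have hNM : (M ⊓ N).relIndex N ≠ 0 := relIndex_ne_zero_of_isCompact_of_isOpen hNc (hMo.inter hNo)
  rw [← relIndex, ← relIndex, relIndex_inf_map_conj_inv, ← hN]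
  exact ⟨hMN, hNM, measure_mul_relIndex_inf_eq μ hMo.measurableSet hNo.measurableSet hMN hNM⟩

/-- **Schlichting.** Let `L` be a locally compact Hausdorff group with a
nonzero left Haar measure `μ`, `M` a compact open subgroup, and `x ∈ L`.  Then the indices
`[M : M ∩ x M x⁻¹]` and `[M : M ∩ x⁻¹ M x]` are finite and
`μ(x M x⁻¹) · [M : M ∩ x M x⁻¹] = μ(M) · [M : M ∩ x⁻¹ M x]`, i.e. the modular function of
`L` is the index ratio. -/
theorem stmt_13 {L : Type*} [Group L] [TopologicalSpace L] [IsTopologicalGroup L]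
    [LocallyCompactSpace L] [T2Space L] [MeasurableSpace L] [BorelSpace L]
    (μ : Measure L) [μ.IsHaarMeasure]
    (M : Subgroup L) (hMc : IsCompact (M : Set L)) (hMo : IsOpen (M : Set L))
    (x : L) :
    ((M ⊓ Subgroup.map (MulAut.conj x).toMonoidHom M).subgroupOf M).index ≠ 0 ∧
    ((M ⊓ Subgroup.map (MulAut.conj x⁻¹).toMonoidHom M).subgroupOf M).index ≠ 0 ∧
    μ {y : L | x⁻¹ * y * x ∈ M} *
        (((M ⊓ Subgroup.map (MulAut.conj x).toMonoidHom M).subgroupOf M).index : ℝ≥0∞) =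
      μ (M : Set L) *
        (((M ⊓ Subgroup.map (MulAut.conj x⁻¹).toMonoidHom M).subgroupOf M).index : ℝ≥0∞) :=
  stmt_13_general μ M hMc hMo x
end

section
/- Let N be a locally compact Hausdorff topological group with left Haar measure μ, M a compact open normal subgroup of N with μ(M) = 1, and σ : M → ℂ a continuous group homomorphism with |σ(m)| = 1 for all m ∈ M, satisfying σ(nmn⁻¹) = σ(m) for all n ∈ N and m ∈ M. Let p : N → ℂ be given by p(y) = σ(y) for y ∈ M, p(y) = 0 otherwise. Then p is central for convolution: for every continuous compactly supported f : N → ℂ and every z ∈ N, ∫_N p(y) f(y⁻¹z) dμ(y) = ∫_N f(y) p(y⁻¹z) dμ(y). -/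
/-!
Both integrands vanish off the compact open subgroup `M` (resp. off `zM`), so after a left
translation by `z` both sides are integrals over `M` against `ν`, the restriction of `μ` to `M`,
which is a Haar measure of the compact group `M`. Compact groups are unimodular: `ν` is preserved
by every continuous automorphism, hence by right translations and by inversion. Substituting
`m ↦ z m z⁻¹` (which fixes `σ`) and then `m ↦ m⁻¹` turns one side into the other.
-/

open MeasureTheory Measure

section CompactGroup

variable {G : Type*} [Group G] [TopologicalSpace G] [IsTopologicalGroup G] [CompactSpace G]
  [MeasurableSpace G] [BorelSpace G] (ν : Measure G) [ν.IsHaarMeasure]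

theorem integral_comp_continuousMulEquiv_of_compactSpace {E : Type*} [NormedAddCommGroup E]
    [NormedSpace ℝ E] (φ : G ≃ₜ* G) (f : G → E) : ∫ x, f (φ x) ∂ν = ∫ x, f x ∂ν :=
  (MonoidHom.measurePreserving (f := (φ : G →* G)) φ.continuous φ.surjective rfl).integral_comp
    φ.toHomeomorph.measurableEmbedding f

theorem isMulRightInvariant_of_compactSpace : ν.IsMulRightInvariant := by
  refine ⟨fun g ↦ ?_⟩
  let conj : G →* G := MonoidHom.mk' (fun x ↦ g⁻¹ * x * g) fun a b ↦ by group
  have hconj : MeasurePreserving conj ν ν :=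
    MonoidHom.measurePreserving (show Continuous fun x ↦ g⁻¹ * x * g by fun_prop)
      (fun x ↦ ⟨g * x * g⁻¹, by simp [conj, mul_assoc]⟩) rfl
  have hright : (· * g) = (g * ·) ∘ conj := by
    funext x
    simp [conj, mul_assoc]
  rw [hright, ← map_map (measurable_const_mul g) hconj.measurable, hconj.map_eq,
    map_mul_left_eq_self]

theorem isInvInvariant_of_compactSpace : ν.IsInvInvariant := by
  have := isMulRightInvariant_of_compactSpace ν
  have hsmul := isMulInvariant_eq_smul_of_compactSpace ν.inv ν
  have huniv : ν.inv Set.univ = ν Set.univ := by rw [inv_apply, Set.inv_univ]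
  rw [hsmul, Measure.smul_apply, ENNReal.smul_def, smul_eq_mul] at huniv
  have hone : haarScalarFactor ν.inv ν = 1 := by
    exact_mod_cast (ENNReal.mul_eq_right (NeZero.ne _) (measure_ne_top _ _)).1 huniv
  exact ⟨by rw [hsmul, hone, one_smul]⟩

end CompactGroup

def ContinuousMulEquiv.conjNormal {G : Type*} [Group G] [TopologicalSpace G]
    [IsTopologicalGroup G] {H : Subgroup G} [H.Normal] (g : G) : H ≃ₜ* H where
  toMulEquiv := MulAut.conjNormal g
  continuous_toFun := continuous_induced_rng.2 (by fun_prop : Continuous fun h : H ↦ g * h * g⁻¹)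
  continuous_invFun :=
    continuous_induced_rng.2 (by fun_prop : Continuous fun h : H ↦ g⁻¹ * h * g⁻¹⁻¹)

theorem integral_eq_integral_subtype_comap {α E : Type*} [MeasurableSpace α]
    [NormedAddCommGroup E] [NormedSpace ℝ E] {μ : Measure α} {s : Set α} (hs : MeasurableSet s)
    {f : α → E} (hf : ∀ x ∉ s, f x = 0) :
    ∫ x, f x ∂μ = ∫ x : s, f x ∂(μ.comap Subtype.val) := by
  rw [integral_subtype_comap hs, setIntegral_eq_integral_of_forall_compl_eq_zero hf]

theorem stmt_14_general {N : Type*} [Group N] [TopologicalSpace N] [IsTopologicalGroup N]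
    [MeasurableSpace N] [BorelSpace N]
    (μ : Measure N) [μ.IsHaarMeasure]
    (M : Subgroup N) [M.Normal]
    (hMc : IsCompact (M : Set N)) (hMo : IsOpen (M : Set N))
    (σ : M →* ℂ)
    (hinv : ∀ (n : N) (m : M) (h : n * (m : N) * n⁻¹ ∈ M), σ ⟨n * (m : N) * n⁻¹, h⟩ = σ m)
    (p : N → ℂ)
    (hp : ∀ y : N, (∀ h : y ∈ M, p y = σ ⟨y, h⟩) ∧ (y ∉ M → p y = 0))
    (f : N → ℂ) :
    ∀ z : N, ∫ y, p y * f (y⁻¹ * z) ∂μ = ∫ y, f y * p (y⁻¹ * z) ∂μ := by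
  intro z
  have : CompactSpace M := isCompact_iff_compactSpace.mp hMc
  let ν : Measure M := μ.comap Subtype.val
  have : ν.IsHaarMeasure :=
    IsHaarMeasure.comap μ (f := M.subtype) (mH := inferInstance) hMo.isOpenEmbedding_subtypeVal
  have : ν.IsInvInvariant := isInvInvariant_of_compactSpace ν
  have hpM (m : M) : p m = σ m := (hp m).1 m.2
  have hM : MeasurableSet (M : Set N) := hMo.measurableSet
  calc ∫ y, p y * f (y⁻¹ * z) ∂μ = ∫ m : M, σ m * f ((m : N)⁻¹ * z) ∂ν := by
        rw [integral_eq_integral_subtype_comap hM fun y hy ↦ by simp [(hp y).2 hy]]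
        simp only [hpM]
        rfl
    _ = ∫ m : M, σ m * f (z * (m : N)⁻¹) ∂ν := by
        rw [← integral_comp_continuousMulEquiv_of_compactSpace ν (ContinuousMulEquiv.conjNormal z)]
        congr 1 with m
        rw [show σ (ContinuousMulEquiv.conjNormal z m) = σ m from hinv z m _]
        simp [ContinuousMulEquiv.conjNormal, mul_assoc]
    _ = ∫ m : M, σ m⁻¹ * f (z * m) ∂ν := by rw [← integral_inv_eq_self]; simp
    _ = ∫ y, f (z * y) * p y⁻¹ ∂μ := by
        rw [integral_eq_integral_subtype_comap hM fun y hy ↦ by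
          simp [(hp y⁻¹).2 (by simpa using hy)]]
        simp only [← hpM, mul_comm]
        rfl
    _ = ∫ y, f y * p (y⁻¹ * z) ∂μ := by
        rw [← integral_mul_left_eq_self (fun y ↦ f y * p (y⁻¹ * z)) z]
        simp [mul_assoc]

/-- Let `N` be a locally compact Hausdorff group with left Haar measure
`μ`, `M` a compact open *normal* subgroup with `μ M = 1`, and `σ : M → ℂ` a continuous
unimodular character satisfying `σ (n m n⁻¹) = σ m` for all `n ∈ N`, `m ∈ M`.  Then
`p = χ_M σ` is central for convolution: for every continuous compactly supported
`f : N → ℂ` and every `z`, `∫ p(y) f(y⁻¹ z) dμ(y) = ∫ f(y) p(y⁻¹ z) dμ(y)`. -/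
theorem stmt_14 {N : Type*} [Group N] [TopologicalSpace N] [IsTopologicalGroup N]
    [LocallyCompactSpace N] [T2Space N] [MeasurableSpace N] [BorelSpace N]
    (μ : Measure N) [μ.IsHaarMeasure]
    (M : Subgroup N) [M.Normal]
    (hMc : IsCompact (M : Set N)) (hMo : IsOpen (M : Set N))
    (hμM : μ (M : Set N) = 1)
    (σ : M →* ℂ) (hσc : Continuous σ) (hσu : ∀ m : M, ‖σ m‖ = 1)
    (hinv : ∀ (n : N) (m : M) (h : n * (m : N) * n⁻¹ ∈ M), σ ⟨n * (m : N) * n⁻¹, h⟩ = σ m)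
    (p : N → ℂ)
    (hp : ∀ y : N, (∀ h : y ∈ M, p y = σ ⟨y, h⟩) ∧ (y ∉ M → p y = 0))
    (f : N → ℂ) (hfc : Continuous f) (hfs : HasCompactSupport f) :
    ∀ z : N, ∫ y, p y * f (y⁻¹ * z) ∂μ = ∫ y, f y * p (y⁻¹ * z) ∂μ :=
  stmt_14_general μ M hMc hMo σ hinv p hp f
end

section
/- Let L be a locally compact Hausdorff topological group with left Haar measure μ, M a compact open subgroup with μ(M) = 1, σ : M → ℂ a continuous group homomorphism with |σ(m)| = 1 for all m ∈ M, and p : L → ℂ given by p(y) = σ(y) for y ∈ M, p(y) = 0 otherwise. Suppose x ∈ L satisfies x⁻¹Mx ⊆ M and σ(x⁻¹hx) = σ(h) for all h ∈ M. Define q : L → ℂ by q(y) = μ(x⁻¹Mx)⁻¹ · σ(xyx⁻¹) for y ∈ x⁻¹Mx and q(y) = 0 otherwise. Then q dominates p as a projection: for every z ∈ L, ∫_L q(y) p(y⁻¹z) dμ(y) = p(z) and ∫_L p(y) q(y⁻¹z) dμ(y) = p(z). -/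
open MeasureTheory

/-! Since `σ` is invariant under conjugation by `x`, `q` is `μ(K)⁻¹ p` restricted to the subgroup
`K = x⁻¹ M x ≤ M`. For `y ∈ M`, and likewise for `y⁻¹ z ∈ M`, multiplicativity gives
`p y * p (y⁻¹ z) = p z`, so both convolution integrands are the constant `p z` on a left translate
of `K`, which has measure `μ(K)`. -/

namespace Subgroup

variable {L : Type*} [Group L]

noncomputable def extendByZero (H : Subgroup L) (τ : H →* ℂ) (y : L) : ℂ :=
  open Classical in if h : y ∈ H then τ ⟨y, h⟩ else 0

variable {H : Subgroup L} {τ : H →* ℂ}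

theorem extendByZero_of_mem {y : L} (hy : y ∈ H) : H.extendByZero τ y = τ ⟨y, hy⟩ := dif_pos hy

theorem extendByZero_of_notMem {y : L} (hy : y ∉ H) : H.extendByZero τ y = 0 := dif_neg hy

theorem extendByZero_mul_extendByZero_inv_mul_of_mem_left {y : L} (hy : y ∈ H) (z : L) :
    H.extendByZero τ y * H.extendByZero τ (y⁻¹ * z) = H.extendByZero τ z := by
  by_cases hz : z ∈ H
  · have hyz : y⁻¹ * z ∈ H := H.mul_mem (H.inv_mem hy) hz
    rw [extendByZero_of_mem hy, extendByZero_of_mem hyz, extendByZero_of_mem hz, ← map_mul]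
    congr 1
    ext
    simp
  · have hyz : y⁻¹ * z ∉ H := fun h ↦ hz (by simpa using H.mul_mem hy h)
    rw [extendByZero_of_notMem hyz, extendByZero_of_notMem hz, mul_zero]

theorem extendByZero_mul_extendByZero_inv_mul_of_mem_right {y z : L} (hyz : y⁻¹ * z ∈ H) :
    H.extendByZero τ y * H.extendByZero τ (y⁻¹ * z) = H.extendByZero τ z := by
  by_cases hy : y ∈ H
  · exact extendByZero_mul_extendByZero_inv_mul_of_mem_left hy z
  · have hz : z ∉ H := fun h ↦ hy (by simpa using H.mul_mem h (H.inv_mem hyz))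
    rw [extendByZero_of_notMem hy, extendByZero_of_notMem hz, zero_mul]

variable [MeasurableSpace L] (μ : Measure L) {K : Subgroup L}

theorem integral_indicator_mul_extendByZero (hKH : K ≤ H) (hK : MeasurableSet (K : Set L))
    (z : L) :
    ∫ y, (K : Set L).indicator (H.extendByZero τ) y * H.extendByZero τ (y⁻¹ * z) ∂μ =
      μ.real K * H.extendByZero τ z := by
  have : (fun y ↦ (K : Set L).indicator (H.extendByZero τ) y * H.extendByZero τ (y⁻¹ * z)) =
      (K : Set L).indicator fun _ ↦ H.extendByZero τ z := by
    ext y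
    by_cases hy : y ∈ K
    · simp only [Set.indicator_of_mem (SetLike.mem_coe.2 hy),
        extendByZero_mul_extendByZero_inv_mul_of_mem_left (hKH hy)]
    · simp only [Set.indicator_of_notMem (SetLike.mem_coe.not.2 hy), zero_mul]
  rw [this, integral_indicator_const _ hK, Complex.real_smul]

theorem integral_extendByZero_mul_indicator [MeasurableMul L] [μ.IsMulLeftInvariant]
    (hKH : K ≤ H) (hK : MeasurableSet (K : Set L)) (z : L) :
    ∫ y, H.extendByZero τ y * (K : Set L).indicator (H.extendByZero τ) (y⁻¹ * z) ∂μ =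
      μ.real K * H.extendByZero τ z := by
  have hmem (y : L) : y⁻¹ * z ∈ K ↔ y ∈ (z⁻¹ * ·) ⁻¹' (K : Set L) := by
    rw [← K.inv_mem_iff]
    simp
  have : (fun y ↦ H.extendByZero τ y * (K : Set L).indicator (H.extendByZero τ) (y⁻¹ * z)) =
      ((z⁻¹ * ·) ⁻¹' (K : Set L)).indicator fun _ ↦ H.extendByZero τ z := by
    ext y
    by_cases hy : y⁻¹ * z ∈ K
    · simp only [Set.indicator_of_mem (SetLike.mem_coe.2 hy),
        Set.indicator_of_mem ((hmem y).1 hy),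
        extendByZero_mul_extendByZero_inv_mul_of_mem_right (hKH hy)]
    · simp only [Set.indicator_of_notMem (SetLike.mem_coe.not.2 hy),
        Set.indicator_of_notMem (mt (hmem y).2 hy), mul_zero]
  rw [this, integral_indicator_const _ (measurable_const_mul _ hK), measureReal_def,
    measure_preimage_mul, ← measureReal_def, Complex.real_smul]

end Subgroup

open Subgroup

theorem stmt_15_general {L : Type*} [Group L] [TopologicalSpace L] [IsTopologicalGroup L]
    [MeasurableSpace L] [BorelSpace L]
    (μ : Measure L) [μ.IsHaarMeasure]
    (M : Subgroup L) (hMc : IsCompact (M : Set L)) (hMo : IsOpen (M : Set L))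
    (σ : M →* ℂ)
    (p : L → ℂ)
    (hp : ∀ y : L, (∀ h : y ∈ M, p y = σ ⟨y, h⟩) ∧ (y ∉ M → p y = 0))
    (x : L)
    (hx1 : ∀ m ∈ M, x⁻¹ * m * x ∈ M)
    (hx2 : ∀ (h : L) (hh : h ∈ M) (hc : x⁻¹ * h * x ∈ M), σ ⟨x⁻¹ * h * x, hc⟩ = σ ⟨h, hh⟩)
    (q : L → ℂ)
    (hq : ∀ y : L,
      (∀ h : x * y * x⁻¹ ∈ M,
        q y = (((μ {g : L | x * g * x⁻¹ ∈ M}).toReal : ℂ))⁻¹ * σ ⟨x * y * x⁻¹, h⟩) ∧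
      (x * y * x⁻¹ ∉ M → q y = 0)) :
    ∀ z : L, (∫ y, q y * p (y⁻¹ * z) ∂μ = p z) ∧ (∫ y, p y * q (y⁻¹ * z) ∂μ = p z) := by
  set S : Subgroup L := M.comap (MulAut.conj x).toMonoidHom
  have hS_mem (g : L) : g ∈ S ↔ x * g * x⁻¹ ∈ M := Iff.rfl
  have hSM : S ≤ M := fun g hg ↦ by simpa [mul_assoc] using hx1 _ hg
  have hS_open : IsOpen (S : Set L) :=
    hMo.preimage (show Continuous fun g ↦ x * g * x⁻¹ by fun_prop)
  have hS_real : μ.real S ≠ 0 := (measureReal_ne_zero_iff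
    (measure_mono hSM |>.trans_lt hMc.measure_lt_top).ne).2
    (hS_open.measure_pos μ ⟨1, S.one_mem⟩).ne'
  have hσ_conj (y : L) (hy : x * y * x⁻¹ ∈ M) : σ ⟨x * y * x⁻¹, hy⟩ = σ ⟨y, hSM hy⟩ := by
    rw [← hx2 _ hy (by simpa [mul_assoc] using hSM hy)]
    congr 2
    group
  have hp_eq : p = M.extendByZero σ := by
    ext y
    by_cases hy : y ∈ M
    · rw [(hp y).1 hy, extendByZero_of_mem hy]
    · rw [(hp y).2 hy, extendByZero_of_notMem hy]
  have hq_eq : q = fun y ↦ (μ.real S : ℂ)⁻¹ * (S : Set L).indicator (M.extendByZero σ) y := by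
    ext y
    by_cases hy : x * y * x⁻¹ ∈ M
    · rw [(hq y).1 hy, Set.indicator_of_mem ((hS_mem y).2 hy), extendByZero_of_mem (hSM hy),
        hσ_conj, measureReal_def]
      rfl
    · rw [(hq y).2 hy, Set.indicator_of_notMem (mt (hS_mem y).1 hy), mul_zero]
  intro z
  subst hp_eq hq_eq
  simp only [mul_assoc, mul_left_comm (M.extendByZero σ _), integral_const_mul,
    integral_indicator_mul_extendByZero μ hSM hS_open.measurableSet,
    integral_extendByZero_mul_indicator μ hSM hS_open.measurableSet, inv_mul_cancel_left₀
    (Complex.ofReal_ne_zero.2 hS_real), and_self]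

/-- Let `L` be a locally compact Hausdorff group with left Haar measure
`μ`, `M` compact open with `μ M = 1`, `σ : M → ℂ` a continuous unimodular character, and
`p = χ_M σ`.  Suppose `x ∈ L` satisfies `x⁻¹ M x ⊆ M` and `σ (x⁻¹ h x) = σ h` for all
`h ∈ M`.  Let `q` be supported on `x⁻¹ M x` with `q y = μ(x⁻¹ M x)⁻¹ σ(x y x⁻¹)` there.
Then `q ⋆ p = p = p ⋆ q`, i.e. `q` dominates `p` as a projection. -/
theorem stmt_15 {L : Type*} [Group L] [TopologicalSpace L] [IsTopologicalGroup L]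
    [LocallyCompactSpace L] [T2Space L] [MeasurableSpace L] [BorelSpace L]
    (μ : Measure L) [μ.IsHaarMeasure]
    (M : Subgroup L) (hMc : IsCompact (M : Set L)) (hMo : IsOpen (M : Set L))
    (hμM : μ (M : Set L) = 1)
    (σ : M →* ℂ) (hσc : Continuous σ) (hσu : ∀ m : M, ‖σ m‖ = 1)
    (p : L → ℂ)
    (hp : ∀ y : L, (∀ h : y ∈ M, p y = σ ⟨y, h⟩) ∧ (y ∉ M → p y = 0))
    (x : L)
    (hx1 : ∀ m ∈ M, x⁻¹ * m * x ∈ M)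
    (hx2 : ∀ (h : L) (hh : h ∈ M) (hc : x⁻¹ * h * x ∈ M), σ ⟨x⁻¹ * h * x, hc⟩ = σ ⟨h, hh⟩)
    (q : L → ℂ)
    (hq : ∀ y : L,
      (∀ h : x * y * x⁻¹ ∈ M,
        q y = (((μ {g : L | x * g * x⁻¹ ∈ M}).toReal : ℂ))⁻¹ * σ ⟨x * y * x⁻¹, h⟩) ∧
      (x * y * x⁻¹ ∉ M → q y = 0)) :
    ∀ z : L, (∫ y, q y * p (y⁻¹ * z) ∂μ = p z) ∧ (∫ y, p y * q (y⁻¹ * z) ∂μ = p z) :=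
  stmt_15_general μ M hMc hMo σ p hp x hx1 hx2 q hq
end

section
/- Let H be a compact Hausdorff topological group, I a directed partially ordered set, (H_i)_{i ∈ I} a family of open subgroups of H with H_j ⊆ H_i whenever i ≤ j, H_∞ = ⋂_{i ∈ I} H_i, and σ : H → ℂ a continuous group homomorphism with finite range. Then: (a) σ(H_∞) = ⋂_{i ∈ I} σ(H_i); (b) there exists i₀ ∈ I such that for all i ≥ i₀ one has σ(H_i) = σ(H_∞) and H_i = (H_i ∩ ker σ) · H_∞, i.e. every element of H_i is a product k·ℓ with k ∈ H_i ∩ ker σ and ℓ ∈ H_∞. -/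
/-!
A point `c` in every `σ(H_i)` has nonempty closed fibres `H_i ∩ σ⁻¹{c}`, which form a directed
family in the compact group, so they meet: this gives (a). The finite sets `σ(H_i)` decrease,
so one of minimal cardinality is already their intersection `σ(H_∞)`; then for `x ∈ H_i`
choose `ℓ ∈ H_∞` with `σ ℓ = σ x`, and `x = (x ℓ⁻¹) ℓ` is the required factorization.
-/

open Set

theorem image_iInter_of_directed_isClosed {X Y ι : Type*} [TopologicalSpace X] [CompactSpace X]
    [TopologicalSpace Y] [T1Space Y] [Nonempty ι] {f : X → Y} (hf : Continuous f)
    {s : ι → Set X} (hs : ∀ i, IsClosed (s i)) (hdir : Directed (· ⊇ ·) s) :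
    f '' ⋂ i, s i = ⋂ i, f '' s i := by
  refine (image_iInter_subset s f).antisymm fun c hc => ?_
  have hc : ∀ i, c ∈ f '' s i := mem_iInter.1 hc
  let t i := s i ∩ f ⁻¹' {c}
  have ht_closed i : IsClosed (t i) := (hs i).inter (isClosed_singleton.preimage hf)
  have ht_dir : Directed (· ⊇ ·) t := fun i j =>
    let ⟨k, hik, hjk⟩ := hdir i j
    ⟨k, inter_subset_inter_left _ hik, inter_subset_inter_left _ hjk⟩
  have ht_ne i : (t i).Nonempty := by
    obtain ⟨x, hx, rfl⟩ := hc i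
    exact ⟨x, hx, rfl⟩
  obtain ⟨x, hx⟩ := IsCompact.nonempty_iInter_of_directed_nonempty_isCompact_isClosed t ht_dir
    ht_ne (fun i => (ht_closed i).isCompact) ht_closed
  have hx : ∀ i, x ∈ t i := mem_iInter.1 hx
  exact ⟨x, mem_iInter.2 fun i => (hx i).1, (hx (Classical.arbitrary ι)).2⟩

theorem exists_forall_ge_eq_iInter_of_antitone_finite {ι α : Type*} [Preorder ι] [Nonempty ι]
    [IsDirected ι (· ≤ ·)] {t : ι → Set α} (ht : Antitone t) (hfin : ∀ i, (t i).Finite) :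
    ∃ i₀, ∀ i, i₀ ≤ i → t i = ⋂ j, t j := by
  obtain ⟨i₀, hi₀⟩ := Nat.sInf_mem (range_nonempty fun i => (t i).ncard)
  have hmin j : (t i₀).ncard ≤ (t j).ncard := by
    simpa only [hi₀] using Nat.sInf_le (mem_range_self (f := fun i => (t i).ncard) j)
  have hconst j (hj : i₀ ≤ j) : t j = t i₀ :=
    eq_of_subset_of_ncard_le (ht hj) (hmin j) (hfin i₀)
  refine ⟨i₀, fun i hi => ?_⟩
  refine (hconst i hi).trans <| subset_antisymm (subset_iInter fun j => ?_) (iInter_subset _ i₀)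
  obtain ⟨k, hik, hjk⟩ := directed_of (· ≤ ·) i₀ j
  exact hconst k hik ▸ ht hjk

theorem Subgroup.exists_mem_ker_mul_of_map_mem_image {G M : Type*} [Group G] [Monoid M]
    (σ : G →* M) {K L : Subgroup G} (hLK : L ≤ K) {x : G} (hx : x ∈ K)
    (hσx : σ x ∈ σ '' (L : Set G)) : ∃ k ∈ K, σ k = 1 ∧ ∃ l ∈ L, x = k * l := by
  obtain ⟨l, hl, hσl⟩ := hσx
  refine ⟨x * l⁻¹, K.mul_mem hx (K.inv_mem (hLK hl)), ?_, l, hl, by group⟩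
  rw [map_mul, ← hσl, ← map_mul, mul_inv_cancel, map_one]

theorem stmt_16_general {H : Type*} [Group H] [TopologicalSpace H] [IsTopologicalGroup H]
    [CompactSpace H]
    {I : Type*} [PartialOrder I] [Nonempty I] [IsDirected I (· ≤ ·)]
    (Hi : I → Subgroup H) (hopen : ∀ i, IsOpen ((Hi i : Subgroup H) : Set H))
    (hanti : ∀ i j : I, i ≤ j → Hi j ≤ Hi i)
    (σ : H →* ℂ) (hσc : Continuous σ) (hσf : (Set.range σ).Finite) :
    (σ '' (⋂ i, ((Hi i : Subgroup H) : Set H)) = ⋂ i, σ '' ((Hi i : Subgroup H) : Set H)) ∧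
    ∃ i₀ : I, ∀ i : I, i₀ ≤ i →
      (σ '' ((Hi i : Subgroup H) : Set H) = σ '' (⋂ j, ((Hi j : Subgroup H) : Set H))) ∧
      (∀ x ∈ Hi i, ∃ k ∈ Hi i, σ k = 1 ∧
        ∃ l ∈ ⋂ j, ((Hi j : Subgroup H) : Set H), x = k * l) := by
  have hanti' : Antitone fun i => ((Hi i : Subgroup H) : Set H) := fun i j h => hanti i j h
  have himage := image_iInter_of_directed_isClosed hσc
    (fun i => Subgroup.isClosed_of_isOpen _ (hopen i)) hanti'.directed_ge
  obtain ⟨i₀, hi₀⟩ := exists_forall_ge_eq_iInter_of_antitone_finite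
    (fun i j h => image_mono (hanti' h)) fun i => hσf.subset (image_subset_range σ _)
  refine ⟨himage, i₀, fun i hi => ?_⟩
  have hstable : σ '' ((Hi i : Subgroup H) : Set H) = σ '' ⋂ j, ((Hi j : Subgroup H) : Set H) :=
    (hi₀ i hi).trans himage.symm
  refine ⟨hstable, fun x hx => ?_⟩
  obtain ⟨k, hk, hσk, l, hl, rfl⟩ := Subgroup.exists_mem_ker_mul_of_map_mem_image σ
    (L := ⨅ j, Hi j) (iInf_le Hi i) hx
    (by rw [Subgroup.coe_iInf, ← hstable]; exact ⟨x, hx, rfl⟩)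
  exact ⟨k, hk, hσk, l, by simpa using hl, rfl⟩

/-- Let `H` be a compact Hausdorff topological group, `I` a directed
partially ordered set, `(H_i)` a family of open subgroups with `H_j ⊆ H_i` for `i ≤ j`,
`H_∞ = ⋂ H_i`, and `σ : H → ℂ` a continuous homomorphism with finite range.  Then
(a) `σ(H_∞) = ⋂ σ(H_i)`; (b) there is `i₀` such that for `i ≥ i₀`,
`σ(H_i) = σ(H_∞)` and `H_i = (H_i ∩ ker σ) · H_∞`. -/
theorem stmt_16 {H : Type*} [Group H] [TopologicalSpace H] [IsTopologicalGroup H]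
    [CompactSpace H] [T2Space H]
    {I : Type*} [PartialOrder I] [Nonempty I] [IsDirected I (· ≤ ·)]
    (Hi : I → Subgroup H) (hopen : ∀ i, IsOpen ((Hi i : Subgroup H) : Set H))
    (hanti : ∀ i j : I, i ≤ j → Hi j ≤ Hi i)
    (σ : H →* ℂ) (hσc : Continuous σ) (hσf : (Set.range σ).Finite) :
    (σ '' (⋂ i, ((Hi i : Subgroup H) : Set H)) = ⋂ i, σ '' ((Hi i : Subgroup H) : Set H)) ∧
    ∃ i₀ : I, ∀ i : I, i₀ ≤ i →
      (σ '' ((Hi i : Subgroup H) : Set H) = σ '' (⋂ j, ((Hi j : Subgroup H) : Set H))) ∧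
      (∀ x ∈ Hi i, ∃ k ∈ Hi i, σ k = 1 ∧
        ∃ l ∈ ⋂ j, ((Hi j : Subgroup H) : Set H), x = k * l) :=
  stmt_16_general Hi hopen hanti σ hσc hσf
end

section
/- Let G be a group and H a subgroup such that [H : H ∩ xHx⁻¹] is finite for every x ∈ G (a Hecke pair), and let σ : G → ℂ be a group homomorphism with |σ(g)| = 1 for all g ∈ G such that σ(H) is finite. Set K = H ∩ ker σ, so [H : K] is finite and all indices [K : K ∩ xKx⁻¹] are finite. Let H_σ(G, H) be the set of functions f : G → ℂ with f(hxk) = σ(h)f(x)σ(k) for all h, k ∈ H, x ∈ G, supported on finitely many double cosets HxH, and let H(G, H) be the set of bi-H-invariant functions G → ℂ supported on finitely many double cosets; equip both with the convolution (f ⋆ g)(x) = Σ_{r ∈ R} f(r) g(r⁻¹x), R any set of representatives of the left cosets G/H (the sum is finite and independent of the choice of R), and with the involutions f*(x) = Δ_K(x⁻¹)·conj(f(x⁻¹)) on H_σ(G, H) and g*(x) = Δ_H(x⁻¹)·conj(g(x⁻¹)) on H(G, H), where Δ_A(y) = [A : A ∩ yAy⁻¹]/[A : A ∩ y⁻¹Ay]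 for a subgroup A. Then the map Φ defined by Φ(f)(x) = conj(σ(x))·f(x) is a bijection from H_σ(G, H) onto H(G, H) satisfying Φ(f ⋆ g) = Φ(f) ⋆ Φ(g) and Φ(f*) = Φ(f)* . -/
/-- The conjugate subgroup `y A y⁻¹`. -/
def conjSub {G : Type*} [Group G] (A : Subgroup G) (y : G) : Subgroup G :=
  Subgroup.map (MulAut.conj y).toMonoidHom A

/-- `Δ_A(y) = [A : A ∩ y A y⁻¹] / [A : A ∩ y⁻¹ A y]`, as a complex number. -/
noncomputable def modularRatio {G : Type*} [Group G] (A : Subgroup G) (y : G) : ℂ :=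
  (((A ⊓ conjSub A y).subgroupOf A).index : ℂ) /
    (((A ⊓ conjSub A y⁻¹).subgroupOf A).index : ℂ)

/-!
When `σ` is a character of all of `G`, twisting by `conj ∘ σ` straightens the `σ`-covariance
`f(hxk) = σ(h) f(x) σ(k)` into bi-`H`-invariance, and it is compatible with convolution because
`conj σ(r) · conj σ(r⁻¹x) = conj σ(x)`. On the involutions, the factor `conj σ(x) = σ(x⁻¹)` is
absorbed by the conjugation of `f(x⁻¹)`, and the modular functions agree by Schlichting's identity
`Δ_K = Δ_H`: for `K ≤ H` of finite index, comparing the two factorisations of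
`[H : K ∩ yKy⁻¹]` and of `[yHy⁻¹ : K ∩ yKy⁻¹]` through `K`, resp. `yKy⁻¹`, and through
`H ∩ yHy⁻¹` gives `[K : K ∩ yKy⁻¹] [yHy⁻¹ : H ∩ yHy⁻¹] = [H : H ∩ yHy⁻¹] [yKy⁻¹ : K ∩ yKy⁻¹]`.
-/

open Subgroup

section Commensurator

variable {G : Type*} [Group G]

lemma relIndex_conjSub (A B : Subgroup G) (y : G) :
    (conjSub A y).relIndex (conjSub B y) = A.relIndex B :=
  relIndex_map_map_of_injective A B (MulAut.conj y).injective

lemma conjSub_conjSub (A : Subgroup G) (y z : G) :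
    conjSub (conjSub A y) z = conjSub A (z * y) := by
  simp only [conjSub, map_map, map_mul]
  rfl

lemma conjSub_one (A : Subgroup G) : conjSub A 1 = A := by
  simp only [conjSub, map_one]
  exact map_id A

lemma relIndex_conjSub_eq (A B : Subgroup G) (y : G) :
    (conjSub A y).relIndex B = A.relIndex (conjSub B y⁻¹) := by
  rw [← relIndex_conjSub _ B y⁻¹, conjSub_conjSub, inv_mul_cancel, conjSub_one]

lemma modularRatio_eq (A : Subgroup G) (y : G) :
    modularRatio A y = ((conjSub A y).relIndex A : ℂ) / (A.relIndex (conjSub A y) : ℂ) := by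
  rw [modularRatio, ← relIndex, ← relIndex, inf_relIndex_left, inf_relIndex_left,
    relIndex_conjSub_eq A A y⁻¹, inv_inv]

def IsHeckePair (H : Subgroup G) : Prop :=
  ∀ x : G, ((H ⊓ conjSub H x).subgroupOf H).index ≠ 0

lemma IsHeckePair.relIndex_conjSub_left_ne_zero {H : Subgroup G} (hH : IsHeckePair H) (x : G) :
    (conjSub H x).relIndex H ≠ 0 := by
  rw [← inf_relIndex_left]
  exact hH x

lemma IsHeckePair.relIndex_conjSub_right_ne_zero {H : Subgroup G} (hH : IsHeckePair H) (x : G) :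
    H.relIndex (conjSub H x) ≠ 0 := by
  simpa [relIndex_conjSub_eq] using hH.relIndex_conjSub_left_ne_zero x⁻¹

lemma IsHeckePair.of_le {H K : Subgroup G} (hH : IsHeckePair H) (hKH : K ≤ H)
    (hK : K.relIndex H ≠ 0) : IsHeckePair K := by
  intro x
  rw [← relIndex, inf_relIndex_left, relIndex_conjSub_eq]
  exact relIndex_ne_zero_trans hK (mt (relIndex_eq_zero_of_le_right (map_mono hKH))
    (hH.relIndex_conjSub_right_ne_zero x⁻¹))

lemma relIndex_mul_relIndex_eq_of_relIndex_eq {K H K' H' : Subgroup G} (hKH : K ≤ H)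
    (hKH' : K' ≤ H') (hK : K.relIndex H = K'.relIndex H') (hK0 : K.relIndex H ≠ 0) :
    K'.relIndex K * H.relIndex H' = H'.relIndex H * K.relIndex K' := by
  have hD : K ⊓ K' ≤ H ⊓ H' := inf_le_inf hKH hKH'
  have left : K'.relIndex K * K.relIndex H = (K ⊓ K').relIndex (H ⊓ H') * H'.relIndex H := by
    rw [← inf_relIndex_left K K', relIndex_mul_relIndex _ _ _ inf_le_left hKH,
      ← inf_relIndex_left H H', relIndex_mul_relIndex _ _ _ hD inf_le_left]
  have right : K.relIndex K' * K'.relIndex H' =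
      (K ⊓ K').relIndex (H ⊓ H') * H.relIndex H' := by
    rw [← inf_relIndex_right K K', relIndex_mul_relIndex _ _ _ inf_le_right hKH',
      ← inf_relIndex_right H H', relIndex_mul_relIndex _ _ _ hD inf_le_right]
  refine Nat.eq_of_mul_eq_mul_right (Nat.pos_of_ne_zero hK0) ?_
  calc K'.relIndex K * H.relIndex H' * K.relIndex H
      = (K ⊓ K').relIndex (H ⊓ H') * H'.relIndex H * H.relIndex H' := by rw [← left]; ring
    _ = H'.relIndex H * (K.relIndex K' * K'.relIndex H') := by rw [right]; ring
    _ = H'.relIndex H * K.relIndex K' * K.relIndex H := by rw [hK]; ring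

lemma IsHeckePair.modularRatio_eq_of_le {H K : Subgroup G} (hH : IsHeckePair H) (hKH : K ≤ H)
    (hK : K.relIndex H ≠ 0) (y : G) : modularRatio K y = modularRatio H y := by
  rw [modularRatio_eq, modularRatio_eq,
    div_eq_div_iff (Nat.cast_ne_zero.2 ((hH.of_le hKH hK).relIndex_conjSub_right_ne_zero y))
      (Nat.cast_ne_zero.2 (hH.relIndex_conjSub_right_ne_zero y))]
  exact_mod_cast relIndex_mul_relIndex_eq_of_relIndex_eq hKH (map_mono hKH)
    (relIndex_conjSub K H y).symm hK

lemma relIndex_ker_ne_zero_of_finite_image {M : Type*} [Monoid M] (σ : G →* M) (H : Subgroup G)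
    (hσ : (σ '' (H : Set G)).Finite) : σ.ker.relIndex H ≠ 0 := by
  rw [← MonoidHom.ker_toHomUnits, relIndex_ker, Nat.card_ne_zero]
  refine ⟨inferInstance, Set.Finite.to_subtype (Set.Finite.of_finite_image ?_
    Units.val_injective.injOn)⟩
  rwa [coe_map, Set.image_image]

end Commensurator

section HeckeAlgebra

variable {G : Type*} [Group G]

def HasFiniteDoubleCosetSupport {M : Type*} [Zero M] (H : Subgroup G) (f : G → M) : Prop :=
  ∃ F : Finset G, ∀ y : G, f y ≠ 0 → ∃ x ∈ F, ∃ h k : H, y = (h : G) * x * (k : G)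

/-- `H_σ(G, H)` -/
def twistedHeckeSpace (H : Subgroup G) (σ : G →* ℂ) : Set (G → ℂ) :=
  {f | (∀ (h k : H) (x : G), f ((h : G) * x * (k : G)) = σ h * f x * σ k) ∧
    HasFiniteDoubleCosetSupport H f}

/-- `H(G, H)` -/
def heckeSpace (H : Subgroup G) : Set (G → ℂ) :=
  {f | (∀ (h k : H) (x : G), f ((h : G) * x * (k : G)) = f x) ∧ HasFiniteDoubleCosetSupport H f}

lemma HasFiniteDoubleCosetSupport.mono {M N : Type*} [Zero M] [Zero N] {H : Subgroup G}
    {f : G → M} {g : G → N} (hf : HasFiniteDoubleCosetSupport H f)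
    (hgf : ∀ y, g y ≠ 0 → f y ≠ 0) : HasFiniteDoubleCosetSupport H g :=
  let ⟨F, hF⟩ := hf
  ⟨F, fun y hy => hF y (hgf y hy)⟩

lemma IsHeckePair.finite_transversal_inter_doubleCoset {H : Subgroup G} (hH : IsHeckePair H)
    {R : Set G} (hR : ∀ y : G, ∃! r : G, r ∈ R ∧ r⁻¹ * y ∈ H) (x₀ : G) :
    {r ∈ R | ∃ h k : H, r = (h : G) * x₀ * (k : G)}.Finite := by
  have : Finite (H ⧸ (H ⊓ conjSub H x₀).subgroupOf H) := Nat.finite_of_card_ne_zero (hH x₀)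
  have eq_of_inv_mul_mem : ∀ r ∈ R, ∀ r' ∈ R, r⁻¹ * r' ∈ H → r = r' := by
    intro r hr r' hr' hrr'
    obtain ⟨t, -, ht⟩ := hR r'
    exact (ht r ⟨hr, hrr'⟩).trans (ht r' ⟨hr', by rw [inv_mul_cancel]; exact H.one_mem⟩).symm
  choose h k hhk using fun r : {r ∈ R | ∃ h k : H, r = (h : G) * x₀ * (k : G)} => r.2.2
  rw [← Set.finite_coe_iff]
  -- if `h r` and `h r'` agree modulo `H ∩ x₀Hx₀⁻¹`, then `r` and `r'` agree modulo `H`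
  refine Finite.of_injective (fun r => (h r : H ⧸ (H ⊓ conjSub H x₀).subgroupOf H))
    fun r r' hrr' => Subtype.ext (eq_of_inv_mul_mem _ r.2.1 _ r'.2.1 ?_)
  obtain ⟨-, u, hu, hconj⟩ := mem_subgroupOf.1 (QuotientGroup.eq.1 hrr')
  have hu' : x₀ * u * x₀⁻¹ = (h r : G)⁻¹ * h r' := by simpa [MulAut.conj_apply] using hconj
  have : (r : G)⁻¹ * r' = (k r : G)⁻¹ * (u * k r') := by
    rw [hhk r, hhk r', show (h r' : G) = h r * (x₀ * u * x₀⁻¹) by rw [hu']; group]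
    group
  rw [this]
  exact H.mul_mem (H.inv_mem (k r).2) (H.mul_mem hu (k r').2)

lemma IsHeckePair.finite_transversal_inter_support {M : Type*} [Zero M] {H : Subgroup G}
    (hH : IsHeckePair H) {R : Set G} (hR : ∀ y : G, ∃! r : G, r ∈ R ∧ r⁻¹ * y ∈ H)
    {f : G → M} (hf : HasFiniteDoubleCosetSupport H f) : {r ∈ R | f r ≠ 0}.Finite := by
  obtain ⟨F, hF⟩ := hf
  refine (F.finite_toSet.biUnion fun x₀ _ =>
    hH.finite_transversal_inter_doubleCoset hR x₀).subset ?_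
  rintro r ⟨hr, hfr⟩
  obtain ⟨x₀, hx₀, hk⟩ := hF r hfr
  exact Set.mem_biUnion hx₀ ⟨hr, hk⟩

lemma apply_mul_finsum_conv (χ : G →* ℂ) (f g : G → ℂ) (R : Set G) (x : G) :
    χ x * ∑ᶠ r ∈ R, f r * g (r⁻¹ * x) = ∑ᶠ r ∈ R, χ r * f r * (χ (r⁻¹ * x) * g (r⁻¹ * x)) := by
  rw [mul_finsum_mem]
  refine finsum_mem_congr rfl fun r _ => ?_
  rw [show χ x = χ r * χ (r⁻¹ * x) by rw [← map_mul, mul_inv_cancel_left]]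
  ring

variable {σ : G →* ℂ}

lemma star_apply_mul_apply (hσ : ∀ g : G, ‖σ g‖ = 1) (g : G) : star (σ g) * σ g = 1 := by
  rw [Complex.star_def, Complex.conj_mul', hσ]
  norm_num

lemma star_apply_eq_apply_inv (hσ : ∀ g : G, ‖σ g‖ = 1) (g : G) : star (σ g) = σ g⁻¹ := by
  rw [map_inv]
  exact eq_inv_of_mul_eq_one_left (star_apply_mul_apply hσ g)

lemma mapsTo_twistedHeckeSpace_heckeSpace (hσ : ∀ g : G, ‖σ g‖ = 1) (H : Subgroup G) :
    Set.MapsTo (fun f x => star (σ x) * f x) (twistedHeckeSpace H σ) (heckeSpace H) := by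
  rintro f ⟨hcov, hsupp⟩
  refine ⟨fun h k x => ?_, hsupp.mono fun y => right_ne_zero_of_mul⟩
  simp only [hcov, map_mul, star_mul']
  linear_combination (star (σ x) * f x) *
    (star (σ k) * σ k * (star_apply_mul_apply hσ h) + star_apply_mul_apply hσ k)

lemma mapsTo_heckeSpace_twistedHeckeSpace (H : Subgroup G) :
    Set.MapsTo (fun f x => σ x * f x) (heckeSpace H) (twistedHeckeSpace H σ) := by
  rintro f ⟨hinv, hsupp⟩
  refine ⟨fun h k x => ?_, hsupp.mono fun y => right_ne_zero_of_mul⟩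
  simp only [hinv, map_mul]
  ring

lemma bijOn_twistedHeckeSpace_heckeSpace (hσ : ∀ g : G, ‖σ g‖ = 1) (H : Subgroup G) :
    Set.BijOn (fun f x => star (σ x) * f x) (twistedHeckeSpace H σ) (heckeSpace H) := by
  refine Set.InvOn.bijOn ⟨fun f _ => ?_, fun f _ => ?_⟩
    (mapsTo_twistedHeckeSpace_heckeSpace hσ H) (mapsTo_heckeSpace_twistedHeckeSpace H)
  all_goals
    funext x
    linear_combination f x * star_apply_mul_apply hσ x

end HeckeAlgebra

/-- Let `(G, H)` be a Hecke pair and `σ : G → ℂ` a unimodular character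
with `σ(H)` finite, `K = H ∩ ker σ`.  Then `[H : K]` is finite, all indices
`[K : K ∩ x K x⁻¹]` are finite, and `Φ(f)(x) = conj(σ x) · f x` is a bijection from the
generalised Hecke algebra `H_σ(G, H)` onto the Hecke algebra `H(G, H)` intertwining the
convolutions (sums over coset representatives) and the involutions
`f*(x) = Δ_K(x⁻¹) conj (f (x⁻¹))`, resp. `g*(x) = Δ_H(x⁻¹) conj (g (x⁻¹))`. -/
theorem stmt_17 {G : Type*} [Group G] (H : Subgroup G)
    (hHecke : ∀ x : G, ((H ⊓ conjSub H x).subgroupOf H).index ≠ 0)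
    (σ : G →* ℂ) (hσu : ∀ g : G, ‖σ g‖ = 1)
    (hσf : (σ '' (H : Set G)).Finite)
    (K : Subgroup G) (hK : K = H ⊓ σ.ker)
    (Hσ Hone : Set (G → ℂ))
    (hHσ : Hσ = {f | (∀ (h k : H) (x : G), f ((h : G) * x * (k : G)) = σ h * f x * σ k) ∧
      ∃ F : Finset G, ∀ y : G, f y ≠ 0 → ∃ x ∈ F, ∃ h k : H, y = (h : G) * x * (k : G)})
    (hHone : Hone = {f | (∀ (h k : H) (x : G), f ((h : G) * x * (k : G)) = f x) ∧
      ∃ F : Finset G, ∀ y : G, f y ≠ 0 → ∃ x ∈ F, ∃ h k : H, y = (h : G) * x * (k : G)})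
    (Φ : (G → ℂ) → (G → ℂ)) (hΦ : ∀ (f : G → ℂ) (x : G), Φ f x = star (σ x) * f x) :
    (K.subgroupOf H).index ≠ 0 ∧
    (∀ x : G, ((K ⊓ conjSub K x).subgroupOf K).index ≠ 0) ∧
    Set.BijOn Φ Hσ Hone ∧
    (∀ f ∈ Hσ, ∀ g ∈ Hσ, ∀ R : Set G, (∀ y : G, ∃! r : G, r ∈ R ∧ r⁻¹ * y ∈ H) →
      ∀ x : G, {r ∈ R | f r * g (r⁻¹ * x) ≠ 0}.Finite ∧
        Φ (fun w => ∑ᶠ r ∈ R, f r * g (r⁻¹ * w)) x = ∑ᶠ r ∈ R, Φ f r * Φ g (r⁻¹ * x)) ∧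
    (∀ f ∈ Hσ, ∀ x : G,
      Φ (fun w => modularRatio K w⁻¹ * star (f w⁻¹)) x =
        modularRatio H x⁻¹ * star (Φ f x⁻¹)) := by
  have hH : IsHeckePair H := hHecke
  have hKH : K ≤ H := hK ▸ inf_le_left
  have hKH_fin : K.relIndex H ≠ 0 := by
    rw [hK, inf_relIndex_left]
    exact relIndex_ker_ne_zero_of_finite_image σ H hσf
  obtain rfl : Φ = fun f x => star (σ x) * f x := funext fun f => funext (hΦ f)
  subst hHσ hHone
  refine ⟨hKH_fin, hH.of_le hKH hKH_fin, bijOn_twistedHeckeSpace_heckeSpace hσu H, ?_, ?_⟩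
  · rintro f ⟨-, hf⟩ g - R hR x
    refine ⟨(hH.finite_transversal_inter_support hR hf).subset
      fun r ⟨hr, hfg⟩ => ⟨hr, left_ne_zero_of_mul hfg⟩, ?_⟩
    exact apply_mul_finsum_conv ((starRingEnd ℂ).toMonoidHom.comp σ) f g R x
  · rintro f - x
    dsimp only
    rw [hH.modularRatio_eq_of_le hKH hKH_fin, star_mul', star_star, star_apply_eq_apply_inv hσu x]
    ring
end

section
/- Let p be a prime and q a positive integer coprime to p. Let N be the additive subgroup {m/pⁿ : m ∈ ℤ, n ∈ ℕ} of ℚ, and let G = N ⋊ ℤ be the semidirect product with multiplication (b₁, k₁)(b₂, k₂) = (b₁ + p^{k₁} b₂, k₁ + k₂). Let H = {(m, 0) : m ∈ ℤ} ⊆ G, and let σ : H → ℂ be the character σ(m, 0) = exp(2πi m / q). Let n₀ be the multiplicative order of p modulo q (the order of the image of p in the unit group of ℤ/qℤ, which exists since gcd(p, q) = 1). Then B := {x ∈ G | σ(h) = σ(x⁻¹hx) for all h ∈ H ∩ xHx⁻¹} equals {(b, k) ∈ G | n₀ divides k}, i.e. B = ℤ[1/p] ⋊ n₀ℤ. -/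
/-- The group `ℚ ⋊ ℤ`, where `k ∈ ℤ` acts on `ℚ` by multiplication by `u^k` for a fixed
unit `u ∈ ℚˣ`: `(b₁, k₁)(b₂, k₂) = (b₁ + u^{k₁} b₂, k₁ + k₂)`. -/
structure QAff (u : ℚˣ) where
  b : ℚ
  k : ℤ

namespace QAff

instance (u : ℚˣ) : Group (QAff u) where
  mul a c := ⟨a.b + (u : ℚ) ^ a.k * c.b, a.k + c.k⟩
  one := ⟨0, 0⟩
  inv a := ⟨-((u : ℚ) ^ (-a.k) * a.b), -a.k⟩
  mul_assoc := by
    rintro ⟨a, i⟩ ⟨b, j⟩ ⟨c, k⟩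
    show QAff.mk (a + (u : ℚ) ^ i * b + (u : ℚ) ^ (i + j) * c) (i + j + k) =
      QAff.mk (a + (u : ℚ) ^ i * (b + (u : ℚ) ^ j * c)) (i + (j + k))
    rw [mk.injEq]
    refine ⟨?_, add_assoc i j k⟩
    rw [zpow_add₀ (Units.ne_zero u)]
    ring
  one_mul := by
    rintro ⟨a, i⟩
    show QAff.mk (0 + (u : ℚ) ^ (0 : ℤ) * a) (0 + i) = QAff.mk a i
    rw [mk.injEq]
    exact ⟨by rw [zpow_zero]; ring, zero_add i⟩
  mul_one := by
    rintro ⟨a, i⟩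
    show QAff.mk (a + (u : ℚ) ^ i * 0) (i + 0) = QAff.mk a i
    rw [mk.injEq]
    exact ⟨by ring, add_zero i⟩
  inv_mul_cancel := by
    rintro ⟨a, i⟩
    show QAff.mk (-((u : ℚ) ^ (-i) * a) + (u : ℚ) ^ (-i) * a) (-i + i) = QAff.mk 0 0
    rw [mk.injEq]
    exact ⟨by ring, neg_add_cancel i⟩

end QAff

private lemma qaff_conj (u : ℚˣ) (b hb : ℚ) (k : ℤ) :
    (⟨b, k⟩ : QAff u)⁻¹ * ⟨hb, 0⟩ * ⟨b, k⟩ = ⟨(u : ℚ) ^ (-k) * hb, 0⟩ := by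
  show QAff.mk (-((u:ℚ)^(-k)*b) + (u:ℚ)^(-k)*hb + (u:ℚ)^(-k+0)*b) (-k+0+k) = _
  rw [QAff.mk.injEq]
  refine ⟨?_, by omega⟩
  rw [add_zero]
  ring

private lemma exp_eq_iff_rat (r s : ℚ) :
    Complex.exp (2 * Real.pi * Complex.I * (r : ℂ)) =
      Complex.exp (2 * Real.pi * Complex.I * (s : ℂ)) ↔ ∃ n : ℤ, r = s + n := by
  rw [Complex.exp_eq_exp_iff_exists_int]
  have h2 : (2 * (Real.pi : ℂ) * Complex.I) ≠ 0 := by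
    simp [Real.pi_ne_zero, Complex.I_ne_zero]
  constructor
  · rintro ⟨n, hn⟩
    refine ⟨n, ?_⟩
    have h3 : (2 * (Real.pi : ℂ) * Complex.I) * r =
        (2 * (Real.pi : ℂ) * Complex.I) * ((s : ℂ) + n) := by rw [hn]; ring
    have h4 := mul_left_cancel₀ h2 h3
    have h5 : ((r : ℚ) : ℂ) = (((s + n : ℚ)) : ℂ) := by push_cast; exact h4
    exact_mod_cast h5
  · rintro ⟨n, rfl⟩
    exact ⟨n, by push_cast; ring⟩

/-- Let `p` be a prime, `q > 0` coprime to `p`, `G = ℤ[1/p] ⋊ ℤ`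
(realised inside `ℚ ⋊ ℤ` with the action `k · b = p^k b`), `H = ℤ × {0}`,
`σ(m, 0) = exp(2πi m/q)`, and `n₀` the multiplicative order of `p` modulo `q`.  Then
`B = {x ∈ G | σ(h) = σ(x⁻¹ h x) for all h ∈ H ∩ x H x⁻¹}` equals `ℤ[1/p] ⋊ n₀ℤ`. -/
theorem stmt_18 (p q : ℕ) (hp : p.Prime) (hq : 0 < q) (hpq : Nat.Coprime p q)
    (u : ℚˣ) (hu : (u : ℚ) = (p : ℚ))
    (n₀ : ℕ) (hn₀ : n₀ = orderOf ((p : ZMod q)))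
    (N : Set ℚ) (hN : N = {r : ℚ | ∃ (m : ℤ) (n : ℕ), r = (m : ℚ) / (p : ℚ) ^ n})
    (HH : Set (QAff u)) (hHH : HH = {g : QAff u | (∃ m : ℤ, (m : ℚ) = g.b) ∧ g.k = 0})
    (σ : QAff u → ℂ)
    (hσ : ∀ g : QAff u, σ g = Complex.exp (2 * Real.pi * Complex.I * ((g.b / (q : ℚ) : ℚ) : ℂ)))
    (B : Set (QAff u))
    (hB : B = {x : QAff u | x.b ∈ N ∧
      ∀ h : QAff u, h ∈ HH → x⁻¹ * h * x ∈ HH → σ h = σ (x⁻¹ * h * x)}) :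
    B = {x : QAff u | x.b ∈ N ∧ (n₀ : ℤ) ∣ x.k} := by
  subst hB hHH
  have hq0 : (q : ℚ) ≠ 0 := by exact_mod_cast hq.ne'
  have hp0 : (p : ℚ) ≠ 0 := by exact_mod_cast hp.pos.ne'
  -- the unit p in ZMod q
  set w : (ZMod q)ˣ := ZMod.unitOfCoprime p hpq with hw
  have hwc : ((w : ZMod q)) = (p : ZMod q) := ZMod.coe_unitOfCoprime p hpq
  have hord : (n₀ : ℤ) = (orderOf w : ℤ) := by
    rw [hn₀, ← hwc, orderOf_units]
  ext x
  obtain ⟨b, k⟩ := x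
  simp only [Set.mem_setOf_eq]
  -- abbreviations for the nonnegative exponents
  set a : ℕ := k.toNat with ha
  set c : ℕ := (-k).toNat with hc
  have hkac : (a : ℤ) - (c : ℤ) = k := by omega
  constructor
  · rintro ⟨hbN, hcond⟩
    refine ⟨hbN, ?_⟩
    -- apply the condition to h = (p^a, 0)
    have hmem1 : (⟨((p ^ a : ℤ) : ℚ), 0⟩ : QAff u) ∈
        {g : QAff u | (∃ m : ℤ, (m : ℚ) = g.b) ∧ g.k = 0} := ⟨⟨p ^ a, rfl⟩, rfl⟩
    have hconj : (⟨b, k⟩ : QAff u)⁻¹ * ⟨((p ^ a : ℤ) : ℚ), 0⟩ * ⟨b, k⟩ =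
        (⟨((p ^ c : ℤ) : ℚ), 0⟩ : QAff u) := by
      rw [qaff_conj, hu]
      congr 1
      have : ((p : ℚ)) ^ (-k) * ((p ^ a : ℤ) : ℚ) = (p : ℚ) ^ ((-k) + (a : ℤ)) := by
        push_cast
        rw [zpow_add₀ hp0, zpow_natCast]
      rw [this]
      have hce : (-k) + (a : ℤ) = (c : ℤ) := by omega
      rw [hce, zpow_natCast]
      push_cast
      ring
    have hmem2 : (⟨b, k⟩ : QAff u)⁻¹ * ⟨((p ^ a : ℤ) : ℚ), 0⟩ * ⟨b, k⟩ ∈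
        {g : QAff u | (∃ m : ℤ, (m : ℚ) = g.b) ∧ g.k = 0} := by
      rw [hconj]; exact ⟨⟨p ^ c, rfl⟩, rfl⟩
    have hσeq := hcond _ hmem1 hmem2
    rw [hconj, hσ, hσ] at hσeq
    simp only at hσeq
    rw [exp_eq_iff_rat] at hσeq
    obtain ⟨n, hn⟩ := hσeq
    -- deduce p^a ≡ p^c mod q
    have hint : ((p ^ a : ℤ)) = (p ^ c : ℤ) + n * q := by
      have : (((p ^ a : ℤ)) : ℚ) = (((p ^ c : ℤ) + n * q : ℤ) : ℚ) := by
        push_cast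
        field_simp at hn
        push_cast at hn ⊢
        linarith
      exact_mod_cast this
    have hzmod : ((p : ZMod q)) ^ a = ((p : ZMod q)) ^ c := by
      have := congrArg (fun m : ℤ => (m : ZMod q)) hint
      push_cast at this
      simpa [ZMod.natCast_self] using this
    have hwu : w ^ a = w ^ c := by
      ext
      push_cast
      rw [hwc]
      exact hzmod
    have hkone : w ^ k = 1 := by
      have : w ^ ((a : ℤ) - (c : ℤ)) = 1 := by
        rw [zpow_sub, zpow_natCast, zpow_natCast, hwu]
        simp
      rwa [hkac] at this
    rw [hord]
    exact orderOf_dvd_iff_zpow_eq_one.2 hkone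
  · rintro ⟨hbN, hdvd⟩
    refine ⟨hbN, ?_⟩
    rintro h ⟨⟨m, hm⟩, hk0⟩ hmem2
    obtain ⟨hb', hk'⟩ := h
    simp only at hm hk0
    subst hk0
    rw [← hm] at hmem2 ⊢
    rw [qaff_conj] at hmem2 ⊢
    obtain ⟨⟨m', hm'⟩, -⟩ := hmem2
    simp only at hm'
    rw [hσ, hσ]
    simp only
    rw [← hm', exp_eq_iff_rat]
    -- need q ∣ m - m'
    have hkone : w ^ k = 1 := orderOf_dvd_iff_zpow_eq_one.1 (by rw [← hord]; exact hdvd)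
    have hwu : w ^ a = w ^ c := by
      have : w ^ ((a : ℤ) - (c : ℤ)) = 1 := by rwa [hkac]
      rw [zpow_sub] at this
      have := mul_eq_one_iff_eq_inv.1 this
      rw [← zpow_natCast w a, ← zpow_natCast w c]
      simpa using this
    have hzmodp : ((p : ZMod q)) ^ a = ((p : ZMod q)) ^ c := by
      rw [← hwc]
      push_cast
      exact_mod_cast congrArg (Units.val) hwu
    -- from hm' : (m' : ℚ) = u^(-k) * m, get m * p^c = m' * p^a in ℤ
    have hrat : (m : ℚ) * (p : ℚ) ^ c = (m' : ℚ) * (p : ℚ) ^ a := by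
      rw [hm', hu]
      have h1 : (p : ℚ) ^ (-k) * (m : ℚ) * ((p:ℚ)^a : ℚ) = (p:ℚ) ^ ((-k) + (a:ℤ)) * m := by
        rw [zpow_add₀ hp0, zpow_natCast]; ring
      have hce : (-k) + (a : ℤ) = (c : ℤ) := by omega
      rw [h1, hce, zpow_natCast]
      ring
    have hint : (m : ℤ) * p ^ c = m' * p ^ a := by exact_mod_cast hrat
    have hz : ((m : ZMod q)) * ((p : ZMod q)) ^ c = (m' : ZMod q) * ((p : ZMod q)) ^ c := by
      have h0 := congrArg (fun t : ℤ => (t : ZMod q)) hint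
      push_cast at h0
      rw [h0, hzmodp]
    have hmz : ((m : ℤ) : ZMod q) = ((m' : ℤ) : ZMod q) := by
      have hc' : ((w ^ c : (ZMod q)ˣ) : ZMod q) = ((p : ZMod q)) ^ c := by
        rw [Units.val_pow_eq_pow_val, hwc]
      rw [← hc'] at hz
      have := (Units.mul_left_inj (w ^ c)).1 hz
      exact_mod_cast this
    have hdq : (q : ℤ) ∣ m - m' :=
      (((ZMod.intCast_eq_intCast_iff m m' q).1 hmz).symm).dvd
    obtain ⟨n, hn⟩ := hdq
    refine ⟨n, ?_⟩
    have : (m : ℚ) = (m' : ℚ) + n * q := by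
      have h9 : (m : ℤ) = m' + n * q := by linarith
      exact_mod_cast congrArg (fun t : ℤ => (t : ℚ)) h9
    rw [this]
    field_simp
end
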